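/- arXiv:2501.15400 — 8 statements merged into one kernel-verified Lean document; each statement's English description precedes it below -/
import Mathlib

section
/- Equivalence of sensitivity models. Let p₁ ∈ (0,1) and p ∈ (0,1), and set r = (p/(1−p)) / (p₁/(1−p₁)). (1) If 0 < c̲ ≤ p₁ ≤ c̄ < 1 and p ∈ [c̲, c̄], then r ∈ [Λ̲, Λ̄], where Λ̲ = (c̲/(1−c̲))·((1−p₁)/p₁) lies in (0,1] and Λ̄ = (c̄/(1−c̄))·((1−p₁)/p₁) lies in [1,∞). (2) Conversely, if Λ̲ ∈ (0,1], Λ̄ ∈ [1,∞) and r ∈ [Λ̲, Λ̄], then p ∈ [c̲, c̄], where c̲ = p₁Λ̲/((1−p₁)+p₁Λ̲) lies in (0, p₁] and c̄ = p₁Λ̄/((1−p₁)+p₁Λ̄) lies in [p₁, 1). -/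
open Set

/-- **Equivalence of sensitivity models.**
Let `p₁ ∈ (0,1)` be the propensity score, `p ∈ (0,1)` a latent propensity score, and
`r = (p/(1−p)) / (p₁/(1−p₁))` the odds ratio.
(1) If `0 < c̲ ≤ p₁ ≤ c̄ < 1` and `p ∈ [c̲, c̄]`, then `r ∈ [Λ̲, Λ̄]` with
`Λ̲ = (c̲/(1−c̲))·((1−p₁)/p₁) ∈ (0,1]` and `Λ̄ = (c̄/(1−c̄))·((1−p₁)/p₁) ∈ [1,∞)`.
(2) If `Λ̲ ∈ (0,1]`, `Λ̄ ∈ [1,∞)` and `r ∈ [Λ̲, Λ̄]`, then `p ∈ [c̲, c̄]` with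
`c̲ = p₁Λ̲/((1−p₁)+p₁Λ̲) ∈ (0,p₁]` and `c̄ = p₁Λ̄/((1−p₁)+p₁Λ̄) ∈ [p₁,1)`. -/
theorem equivalence_sensitivity_models
    (p1 p : ℝ) (hp1 : p1 ∈ Set.Ioo (0:ℝ) 1) (hp : p ∈ Set.Ioo (0:ℝ) 1)
    (r : ℝ) (hr : r = (p / (1 - p)) / (p1 / (1 - p1))) :
    (∀ cl cu : ℝ, 0 < cl → cl ≤ p1 → p1 ≤ cu → cu < 1 → p ∈ Set.Icc cl cu →
      (cl / (1 - cl) * ((1 - p1) / p1)) ∈ Set.Ioc (0:ℝ) 1 ∧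
      (cu / (1 - cu) * ((1 - p1) / p1)) ∈ Set.Ici (1:ℝ) ∧
      r ∈ Set.Icc (cl / (1 - cl) * ((1 - p1) / p1)) (cu / (1 - cu) * ((1 - p1) / p1)))
    ∧
    (∀ Λl Λu : ℝ, Λl ∈ Set.Ioc (0:ℝ) 1 → Λu ∈ Set.Ici (1:ℝ) → r ∈ Set.Icc Λl Λu →
      (p1 * Λl / ((1 - p1) + p1 * Λl)) ∈ Set.Ioc 0 p1 ∧
      (p1 * Λu / ((1 - p1) + p1 * Λu)) ∈ Set.Ico p1 1 ∧
      p ∈ Set.Icc (p1 * Λl / ((1 - p1) + p1 * Λl)) (p1 * Λu / ((1 - p1) + p1 * Λu))) := by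
  obtain ⟨hp1a, hp1b⟩ := hp1
  obtain ⟨hpa, hpb⟩ := hp
  have h1p1 : 0 < 1 - p1 := by linarith
  have h1p : 0 < 1 - p := by linarith
  have key : r * ((1 - p) * p1) = p * (1 - p1) := by
    subst hr; field_simp
  constructor
  · intro cl cu hcl hclp1 hp1cu hcu hpmem
    have hcl1 : cl < 1 := lt_of_le_of_lt hclp1 hp1b
    have hcu0 : 0 < cu := lt_of_lt_of_le hcl (hclp1.trans hp1cu)
    have h1cl : 0 < 1 - cl := by linarith
    have h1cu : 0 < 1 - cu := by linarith
    refine ⟨⟨by positivity, ?_⟩, ?_, ?_, ?_⟩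
    · rw [div_mul_div_comm, div_le_one (by positivity)]
      nlinarith
    · rw [Set.mem_Ici, div_mul_div_comm, le_div_iff₀ (by positivity)]
      nlinarith
    · rw [div_mul_div_comm, div_le_iff₀ (by positivity)]
      nlinarith [key, mul_nonneg h1p1.le (sub_nonneg.2 hpmem.1), h1p, hp1a,
        mul_pos h1p hp1a]
    · rw [div_mul_div_comm, le_div_iff₀ (by positivity)]
      nlinarith [key, mul_nonneg h1p1.le (sub_nonneg.2 hpmem.2), h1p, hp1a,
        mul_pos h1p hp1a]
  · intro Λl Λu hΛl hΛu hrmem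
    obtain ⟨hΛl0, hΛl1⟩ := hΛl
    have hΛu1 : (1:ℝ) ≤ Λu := hΛu
    have hΛu0 : (0:ℝ) < Λu := by linarith
    have hdl : 0 < (1 - p1) + p1 * Λl := by positivity
    have hdu : 0 < (1 - p1) + p1 * Λu := by positivity
    refine ⟨⟨by positivity, ?_⟩, ⟨?_, ?_⟩, ?_, ?_⟩
    · rw [div_le_iff₀ hdl]
      nlinarith [mul_nonneg (mul_nonneg hp1a.le h1p1.le) (sub_nonneg.2 hΛl1)]
    · rw [le_div_iff₀ hdu]
      nlinarith [mul_nonneg (mul_nonneg hp1a.le h1p1.le) (sub_nonneg.2 hΛu1)]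
    · rw [div_lt_one hdu]; nlinarith
    · rw [div_le_iff₀ hdl]
      nlinarith [mul_nonneg (mul_nonneg hp1a.le h1p.le) (sub_nonneg.2 hrmem.1)]
    · rw [le_div_iff₀ hdu]
      nlinarith [mul_nonneg (mul_nonneg hp1a.le h1p.le) (sub_nonneg.2 hrmem.2)]
end

section
/- CDF bounds under c-dependence. Assume overlap and either marginal c-dependence or joint c-dependence with bounds c̲, c̄. Then for every y ∈ ℝ: F̲₁(y) ≤ P(Y₁ ≤ y) ≤ F̄₁(y) and F̲₀(y) ≤ P(Y₀ ≤ y) ≤ F̄₀(y). -/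
/-!
Write `S = {X = 1}`. If `c̲ ≤ E[1_S ∣ 𝓜] ≤ c̄` for a σ-algebra `𝓜` making `Y_x` measurable,
then integrating over `A = {Y_x ≤ y}` and over `Aᶜ` gives
`c̲ P(A) ≤ P(A ∩ S) ≤ c̄ P(A)` and `c̲ (1 - P(A)) ≤ p₁ - P(A ∩ S) ≤ c̄ (1 - P(A))`;
solving these four inequalities for `P(A)` yields `F̲₁ ≤ P(A) ≤ F̄₁`, since `P(A ∩ S) = G₁(y) p₁`.
The bounds for `Y₀` are the same argument for `Sᶜ`, on which the conditional probability
lies in `[1 - c̄, 1 - c̲]`. Marginal and joint c-dependence only differ in the choice of `𝓜`.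
-/

open MeasureTheory ProbabilityTheory Set Filter Function

noncomputable section

lemma max_le_and_le_min_of_mem_Icc {a b p c d : ℝ} (hc : 0 < c) (hd : 0 < d)
    (hb : b ∈ Icc (c * a) (d * a)) (hpb : p - b ∈ Icc (c * (1 - a)) (d * (1 - a))) :
    max (b / d) ((c - p) / c + b / c) ≤ a ∧ a ≤ min (b / c) ((d - p) / d + b / d) := by
  obtain ⟨hb₁, hb₂⟩ := hb
  obtain ⟨hpb₁, hpb₂⟩ := hpb
  refine ⟨max_le ?_ ?_, le_min ?_ ?_⟩
  · rw [div_le_iff₀ hd]; linarith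
  · rw [← add_div, div_le_iff₀ hc]; linarith
  · rw [le_div_iff₀ hc]; linarith
  · rw [← add_div, le_div_iff₀ hd]; linarith

section CondExpBounds

variable {Ω : Type*} {m mΩ : MeasurableSpace Ω} {P : Measure Ω} {T A : Set Ω} {c d : ℝ}

lemma setIntegral_mem_Icc_of_ae_condExp_mem_Icc [IsFiniteMeasure P] (hm : m ≤ mΩ)
    {f : Ω → ℝ} (hf : Integrable f P) (hbd : ∀ᵐ ω ∂P, P[f | m] ω ∈ Icc c d)
    (hA : MeasurableSet[m] A) :
    ∫ ω in A, f ω ∂P ∈ Icc (c * P.real A) (d * P.real A) := by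
  rw [← setIntegral_condExp hm hf hA]
  constructor
  · calc c * P.real A = ∫ _ in A, c ∂P := by rw [setIntegral_const, smul_eq_mul, mul_comm]
      _ ≤ ∫ ω in A, P[f | m] ω ∂P :=
        setIntegral_mono_ae (integrable_const c).integrableOn integrable_condExp.integrableOn
          (hbd.mono fun _ h => h.1)
  · calc ∫ ω in A, P[f | m] ω ∂P ≤ ∫ _ in A, d ∂P :=
        setIntegral_mono_ae integrable_condExp.integrableOn (integrable_const d).integrableOn
          (hbd.mono fun _ h => h.2)
      _ = d * P.real A := by rw [setIntegral_const, smul_eq_mul, mul_comm]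

lemma measureReal_inter_mem_Icc_of_ae_condExp_indicator_mem_Icc [IsFiniteMeasure P]
    (hm : m ≤ mΩ) (hT : MeasurableSet T)
    (hbd : ∀ᵐ ω ∂P, P[T.indicator 1 | m] ω ∈ Icc c d) (hA : MeasurableSet[m] A) :
    P.real (A ∩ T) ∈ Icc (c * P.real A) (d * P.real A) := by
  have h := setIntegral_mem_Icc_of_ae_condExp_mem_Icc hm ((integrable_const 1).indicator hT) hbd hA
  rwa [setIntegral_indicator hT, Pi.one_def, setIntegral_one_eq_measureReal] at h

lemma ae_condExp_indicator_compl_mem_Icc [IsFiniteMeasure P] (hm : m ≤ mΩ)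
    (hT : MeasurableSet T) (hbd : ∀ᵐ ω ∂P, P[T.indicator 1 | m] ω ∈ Icc c d) :
    ∀ᵐ ω ∂P, P[Tᶜ.indicator 1 | m] ω ∈ Icc (1 - d) (1 - c) := by
  have hsub : P[Tᶜ.indicator 1 | m] =ᵐ[P] (1 : Ω → ℝ) - P[T.indicator 1 | m] := by
    rw [indicator_compl]
    refine (condExp_sub (integrable_const 1) ((integrable_const 1).indicator hT) m).trans ?_
    rw [Pi.one_def, condExp_const hm]
  filter_upwards [hsub, hbd] with ω hω hω'
  rw [hω, Pi.sub_apply, Pi.one_apply]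
  exact ⟨by linarith [hω'.2], by linarith [hω'.1]⟩

lemma measureReal_bounds_of_ae_condExp_indicator_mem_Icc [IsProbabilityMeasure P]
    (hm : m ≤ mΩ) (hT : MeasurableSet T) (hc : 0 < c) (hd : 0 < d)
    (hbd : ∀ᵐ ω ∂P, P[T.indicator 1 | m] ω ∈ Icc c d) (hA : MeasurableSet[m] A) :
    max (P.real (A ∩ T) / d) ((c - P.real T) / c + P.real (A ∩ T) / c) ≤ P.real A ∧
      P.real A ≤ min (P.real (A ∩ T) / c) ((d - P.real T) / d + P.real (A ∩ T) / d) := by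
  have hAc := measureReal_inter_mem_Icc_of_ae_condExp_indicator_mem_Icc hm hT hbd hA.compl
  have hsplit : P.real (Aᶜ ∩ T) = P.real T - P.real (A ∩ T) := by
    rw [eq_sub_iff_add_eq', inter_comm A, inter_comm Aᶜ, ← sdiff_eq]
    exact measureReal_inter_add_sdiff (hm A hA)
  rw [measureReal_compl (hm A hA), probReal_univ, hsplit] at hAc
  exact max_le_and_le_min_of_mem_Icc hc hd
    (measureReal_inter_mem_Icc_of_ae_condExp_indicator_mem_Icc hm hT hbd hA) hAc

end CondExpBounds

lemma exists_measurable_of_marginal_or_joint {Ω α β : Type*} {mΩ : MeasurableSpace Ω}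
    [MeasurableSpace α] [MeasurableSpace β] {Y1 : Ω → α} {Y0 : Ω → β}
    (hY1 : Measurable Y1) (hY0 : Measurable Y0) (B : MeasurableSpace Ω → Prop)
    (h : (B (.comap Y1 inferInstance) ∧ B (.comap Y0 inferInstance)) ∨
      B (.comap (fun ω => (Y1 ω, Y0 ω)) inferInstance)) :
    (∃ m ≤ mΩ, Measurable[m] Y1 ∧ B m) ∧ (∃ m ≤ mΩ, Measurable[m] Y0 ∧ B m) := by
  rcases h with ⟨h1, h0⟩ | h
  · exact ⟨⟨_, hY1.comap_le, comap_measurable Y1, h1⟩, ⟨_, hY0.comap_le, comap_measurable Y0, h0⟩⟩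
  · have hpair := comap_measurable (m := inferInstance) fun ω => (Y1 ω, Y0 ω)
    exact ⟨⟨_, (hY1.prodMk hY0).comap_le, measurable_fst.comp hpair, h⟩,
      ⟨_, (hY1.prodMk hY0).comap_le, measurable_snd.comp hpair, h⟩⟩

theorem cdf_bounds_under_c_dependence_general
    {Ω : Type*} [MeasurableSpace Ω] (P : Measure Ω) [IsProbabilityMeasure P]
    (Y1 Y0 : Ω → ℝ) (X : Ω → Bool)
    (hY1 : Measurable Y1) (hY0 : Measurable Y0) (hX : Measurable X)
    (Y : Ω → ℝ) (hY : ∀ ω, Y ω = if X ω then Y1 ω else Y0 ω)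
    (p1 p0 : ℝ) (hp1 : p1 = (P {ω | X ω = true}).toReal) (hp0 : p0 = 1 - p1)
    (cl cu : ℝ) (hcl : 0 < cl) (hclp1 : cl ≤ p1) (hp1cu : p1 ≤ cu) (hcu : cu < 1)
    (G1 G0 : ℝ → ℝ)
    (hG1 : ∀ y, G1 y = (P {ω | Y ω ≤ y ∧ X ω = true}).toReal / p1)
    (hG0 : ∀ y, G0 y = (P {ω | Y ω ≤ y ∧ X ω = false}).toReal / p0)
    (Fu1 Fl1 Fu0 Fl0 : ℝ → ℝ)
    (hFu1 : ∀ y, Fu1 y = min (G1 y * p1 / cl) ((cu - p1) / cu + G1 y * p1 / cu))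
    (hFl1 : ∀ y, Fl1 y = max (G1 y * p1 / cu) ((cl - p1) / cl + G1 y * p1 / cl))
    (hFu0 : ∀ y, Fu0 y = min (G0 y * p0 / (1 - cu)) ((p1 - cl) / (1 - cl) + G0 y * p0 / (1 - cl)))
    (hFl0 : ∀ y, Fl0 y = max (G0 y * p0 / (1 - cl)) ((p1 - cu) / (1 - cu) + G0 y * p0 / (1 - cu)))
    (hdep :
      ((∀ᵐ ω ∂P, (P[(fun ω => if X ω then (1:ℝ) else 0) |
          MeasurableSpace.comap Y1 inferInstance]) ω ∈ Set.Icc cl cu) ∧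
       (∀ᵐ ω ∂P, (P[(fun ω => if X ω then (1:ℝ) else 0) |
          MeasurableSpace.comap Y0 inferInstance]) ω ∈ Set.Icc cl cu))
      ∨
      (∀ᵐ ω ∂P, (P[(fun ω => if X ω then (1:ℝ) else 0) |
          MeasurableSpace.comap (fun ω => (Y1 ω, Y0 ω)) inferInstance]) ω ∈ Set.Icc cl cu)) :
    ∀ y : ℝ,
      (Fl1 y ≤ (P {ω | Y1 ω ≤ y}).toReal ∧ (P {ω | Y1 ω ≤ y}).toReal ≤ Fu1 y) ∧
      (Fl0 y ≤ (P {ω | Y0 ω ≤ y}).toReal ∧ (P {ω | Y0 ω ≤ y}).toReal ≤ Fu0 y) := by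
  intro y
  set S : Set Ω := {ω | X ω = true}
  have hS : MeasurableSet S := hX (measurableSet_singleton true)
  have hind : (fun ω => if X ω then (1 : ℝ) else 0) = S.indicator 1 := by
    ext ω; by_cases hXω : X ω <;> simp [S, hXω]
  have hp1S : P.real S = p1 := hp1.symm
  have hp0S : P.real Sᶜ = p0 := by rw [measureReal_compl hS, probReal_univ, hp1S, hp0]
  have hG1y : G1 y * p1 = P.real (Y1 ⁻¹' Iic y ∩ S) := by
    rw [hG1 y, div_mul_cancel₀ _ (hcl.trans_le hclp1).ne']
    congr 2; ext ω; cases hXω : X ω <;> simp [S, hY, hXω]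
  have hG0y : G0 y * p0 = P.real (Y0 ⁻¹' Iic y ∩ Sᶜ) := by
    rw [hG0 y, div_mul_cancel₀ _ (by linarith : p0 ≠ 0)]
    congr 2; ext ω; cases hXω : X ω <;> simp [S, hY, hXω]
  obtain ⟨⟨m1, hm1, hY1m, h1⟩, ⟨m0, hm0, hY0m, h0⟩⟩ :=
    exists_measurable_of_marginal_or_joint hY1 hY0
      (fun m => ∀ᵐ ω ∂P, P[S.indicator 1 | m] ω ∈ Icc cl cu) (hind ▸ hdep)
  obtain ⟨hl1, hu1⟩ := measureReal_bounds_of_ae_condExp_indicator_mem_Icc hm1 hS hcl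
    (by linarith) h1 (hY1m (measurableSet_Iic (a := y)))
  obtain ⟨hl0, hu0⟩ := measureReal_bounds_of_ae_condExp_indicator_mem_Icc hm0 hS.compl
    (by linarith) (by linarith) (ae_condExp_indicator_compl_mem_Icc hm0 hS h0)
    (hY0m (measurableSet_Iic (a := y)))
  rw [hp1S, ← hG1y] at hl1 hu1
  rw [hp0S, ← hG0y, show 1 - cu - p0 = p1 - cu by linarith] at hl0
  rw [hp0S, ← hG0y, show 1 - cl - p0 = p1 - cl by linarith] at hu0
  exact ⟨⟨(hFl1 y).trans_le hl1, hu1.trans_eq (hFu1 y).symm⟩,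
    ⟨(hFl0 y).trans_le hl0, hu0.trans_eq (hFu0 y).symm⟩⟩

/-- **CDF bounds under c-dependence.**
Under overlap and either marginal or joint c-dependence with bounds `c̲, c̄`, the cdf of each
potential outcome is bounded by the explicit bound functions: for all `y`,
`F̲₁(y) ≤ P(Y₁ ≤ y) ≤ F̄₁(y)` and `F̲₀(y) ≤ P(Y₀ ≤ y) ≤ F̄₀(y)`. -/
theorem cdf_bounds_under_c_dependence
    {Ω : Type*} [MeasurableSpace Ω] (P : Measure Ω) [IsProbabilityMeasure P]
    (Y1 Y0 : Ω → ℝ) (X : Ω → Bool)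
    (hY1 : Measurable Y1) (hY0 : Measurable Y0) (hX : Measurable X)
    (Y : Ω → ℝ) (hY : ∀ ω, Y ω = if X ω then Y1 ω else Y0 ω)
    (p1 p0 : ℝ) (hp1 : p1 = (P {ω | X ω = true}).toReal) (hp0 : p0 = 1 - p1)
    (hov : 0 < p1 ∧ p1 < 1)
    (cl cu : ℝ) (hcl : 0 < cl) (hclp1 : cl ≤ p1) (hp1cu : p1 ≤ cu) (hcu : cu < 1)
    (G1 G0 : ℝ → ℝ)
    (hG1 : ∀ y, G1 y = (P {ω | Y ω ≤ y ∧ X ω = true}).toReal / p1)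
    (hG0 : ∀ y, G0 y = (P {ω | Y ω ≤ y ∧ X ω = false}).toReal / p0)
    (Fu1 Fl1 Fu0 Fl0 : ℝ → ℝ)
    (hFu1 : ∀ y, Fu1 y = min (G1 y * p1 / cl) ((cu - p1) / cu + G1 y * p1 / cu))
    (hFl1 : ∀ y, Fl1 y = max (G1 y * p1 / cu) ((cl - p1) / cl + G1 y * p1 / cl))
    (hFu0 : ∀ y, Fu0 y = min (G0 y * p0 / (1 - cu)) ((p1 - cl) / (1 - cl) + G0 y * p0 / (1 - cl)))
    (hFl0 : ∀ y, Fl0 y = max (G0 y * p0 / (1 - cl)) ((p1 - cu) / (1 - cu) + G0 y * p0 / (1 - cu)))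
    (hdep :
      ((∀ᵐ ω ∂P, (P[(fun ω => if X ω then (1:ℝ) else 0) |
          MeasurableSpace.comap Y1 inferInstance]) ω ∈ Set.Icc cl cu) ∧
       (∀ᵐ ω ∂P, (P[(fun ω => if X ω then (1:ℝ) else 0) |
          MeasurableSpace.comap Y0 inferInstance]) ω ∈ Set.Icc cl cu))
      ∨
      (∀ᵐ ω ∂P, (P[(fun ω => if X ω then (1:ℝ) else 0) |
          MeasurableSpace.comap (fun ω => (Y1 ω, Y0 ω)) inferInstance]) ω ∈ Set.Icc cl cu)) :
    ∀ y : ℝ,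
      (Fl1 y ≤ (P {ω | Y1 ω ≤ y}).toReal ∧ (P {ω | Y1 ω ≤ y}).toReal ≤ Fu1 y) ∧
      (Fl0 y ≤ (P {ω | Y0 ω ≤ y}).toReal ∧ (P {ω | Y0 ω ≤ y}).toReal ≤ Fu0 y) :=
  cdf_bounds_under_c_dependence_general P Y1 Y0 X hY1 hY0 hX Y hY p1 p0 hp1 hp0 cl cu hcl hclp1
    hp1cu hcu G1 G0 hG1 hG0 Fu1 Fl1 Fu0 Fl0 hFu1 hFl1 hFu0 hFl0 hdep
end
end

section
/- The counterfactual-arm bound functions are cumulative distribution functions: assume overlap and 0 < c̲ ≤ p₁ ≤ c̄ < 1. Then each of the four functions F̄₁⁰, F̲₁⁰, F̄₀¹, F̲₀¹ is nondecreasing, right-continuous, tends to 0 as y → −∞, and tends to 1 as y → +∞. -/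
/-!
`G₁` and `G₀` are the cdfs of the law of `Y` under `P(· ∣ X = 1)` and `P(· ∣ X = 0)`. Each bound
is `φ ∘ G` where `φ` is the minimum or maximum of two nondecreasing lines, one through the origin
and one through `(1, 1)`; composing a cdf with a continuous nondecreasing `φ` with `φ 0 = 0` and
`φ 1 = 1` gives a cdf. For the minimum, `c̲ ≤ p₁` makes the slope of the first line at least `1`
and `p₁ ≤ c̄` makes the intercept of the second nonnegative, so `φ 0 = 0` and `φ 1 = 1`; the
maximum is symmetric.
-/

open MeasureTheory ProbabilityTheory Set Filter Function Topology

noncomputable section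

def IsCDF (F : ℝ → ℝ) : Prop :=
  Monotone F ∧ (∀ y, ContinuousWithinAt F (Ici y) y) ∧
    Tendsto F atBot (𝓝 0) ∧ Tendsto F atTop (𝓝 1)

lemma isCDF_cdf (μ : Measure ℝ) [IsProbabilityMeasure μ] : IsCDF (cdf μ) :=
  ⟨(cdf μ).mono, (cdf μ).right_continuous, tendsto_cdf_atBot μ, tendsto_cdf_atTop μ⟩

lemma isCDF_cond_measure_le {Ω : Type*} [MeasurableSpace Ω] {μ : Measure Ω} [IsFiniteMeasure μ]
    {Y : Ω → ℝ} (hY : Measurable Y) {A : Set Ω} (hA : MeasurableSet A) (hμA : μ A ≠ 0) :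
    IsCDF fun y => (μ {ω | Y ω ≤ y ∧ ω ∈ A}).toReal / (μ A).toReal := by
  have := cond_isProbabilityMeasure (μ := μ) hμA
  have := Measure.isProbabilityMeasure_map (μ := μ[|A]) hY.aemeasurable
  convert isCDF_cdf ((μ[|A]).map Y) using 1
  funext y
  rw [cdf_eq_real, measureReal_def, Measure.map_apply hY measurableSet_Iic, cond_apply hA,
    ENNReal.toReal_mul, ENNReal.toReal_inv, inter_comm, div_eq_inv_mul]
  rfl

namespace IsCDF

variable {G : ℝ → ℝ}

lemma comp (hG : IsCDF G) {φ : ℝ → ℝ} (hφ : Monotone φ) (hφc : Continuous φ)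
    (hφ0 : φ 0 = 0) (hφ1 : φ 1 = 1) : IsCDF (φ ∘ G) := by
  obtain ⟨hmono, hright, hbot, htop⟩ := hG
  refine ⟨hφ.comp hmono, fun y => hφc.continuousAt.comp_continuousWithinAt (hright y), ?_, ?_⟩
  · simpa only [hφ0] using (hφc.tendsto 0).comp hbot
  · simpa only [hφ1] using (hφc.tendsto 1).comp htop

lemma min_lines (hG : IsCDF G) {k a s : ℝ} (hk : 1 ≤ k) (ha : 0 ≤ a) (hs : 0 ≤ s)
    (has : a + s = 1) : IsCDF fun y => min (G y * k) (a + G y * s) := by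
  refine hG.comp (φ := fun t => min (t * k) (a + t * s)) ?_ (by fun_prop) ?_ ?_
  · intro t u htu
    dsimp only
    gcongr
  · simp [ha]
  · simp [has, hk]

lemma max_lines (hG : IsCDF G) {k a s : ℝ} (hk₀ : 0 ≤ k) (hk₁ : k ≤ 1) (ha : a ≤ 0)
    (has : a + s = 1) : IsCDF fun y => max (G y * k) (a + G y * s) := by
  refine hG.comp (φ := fun t => max (t * k) (a + t * s)) ?_ (by fun_prop) ?_ ?_
  · intro t u htu
    dsimp only
    gcongr
    linarith
  · simp [ha]
  · simp [has, hk₁]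

variable {p c c' : ℝ}

lemma min_bound (hG : IsCDF G) (hc : 0 < c) (hcp : c ≤ p) (hpc' : p ≤ c') (hc' : c' < 1) :
    IsCDF fun y => min (G y * p * (1 - c) / ((1 - p) * c))
      ((c' - p) / (c' * (1 - p)) + G y * p * (1 - c') / ((1 - p) * c')) := by
  have hp : 0 < 1 - p := by linarith
  have hc₀ : c ≠ 0 := by linarith
  have hc'₀ : c' ≠ 0 := by linarith
  have hp₀ : 1 - p ≠ 0 := hp.ne'
  have hk : 1 ≤ p * (1 - c) / ((1 - p) * c) := by
    rw [one_le_div (by positivity)]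
    linarith
  have ha : 0 ≤ (c' - p) / (c' * (1 - p)) :=
    div_nonneg (by linarith) (mul_pos (by linarith) hp).le
  have hs : 0 ≤ p * (1 - c') / ((1 - p) * c') :=
    div_nonneg (mul_nonneg (by linarith) (by linarith)) (mul_pos hp (by linarith)).le
  have has : (c' - p) / (c' * (1 - p)) + p * (1 - c') / ((1 - p) * c') = 1 := by
    field_simp
    ring
  simpa only [mul_div_assoc, mul_assoc] using hG.min_lines hk ha hs has

lemma max_bound (hG : IsCDF G) (hc : 0 < c) (hcp : c ≤ p) (hpc' : p ≤ c') (hc' : c' < 1) :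
    IsCDF fun y => max (G y * p * (1 - c') / ((1 - p) * c'))
      ((c - p) / (c * (1 - p)) + G y * p * (1 - c) / ((1 - p) * c)) := by
  have hp : 0 < 1 - p := by linarith
  have hc₀ : c ≠ 0 := by linarith
  have hc'₀ : c' ≠ 0 := by linarith
  have hp₀ : 1 - p ≠ 0 := hp.ne'
  have hk₀ : 0 ≤ p * (1 - c') / ((1 - p) * c') :=
    div_nonneg (mul_nonneg (by linarith) (by linarith)) (mul_pos hp (by linarith)).le
  have hk₁ : p * (1 - c') / ((1 - p) * c') ≤ 1 := by
    rw [div_le_one (mul_pos hp (by linarith))]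
    linarith
  have ha : (c - p) / (c * (1 - p)) ≤ 0 :=
    div_nonpos_of_nonpos_of_nonneg (by linarith) (mul_pos hc hp).le
  have has : (c - p) / (c * (1 - p)) + p * (1 - c) / ((1 - p) * c) = 1 := by
    field_simp
    ring
  simpa only [mul_div_assoc, mul_assoc] using hG.max_lines hk₀ hk₁ ha has

end IsCDF

theorem counterfactual_arm_bounds_are_cdfs_general
    {Ω : Type*} [MeasurableSpace Ω] (P : Measure Ω) [IsProbabilityMeasure P]
    (Y1 Y0 : Ω → ℝ) (X : Ω → Bool)
    (hY1 : Measurable Y1) (hY0 : Measurable Y0) (hX : Measurable X)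
    (Y : Ω → ℝ) (hY : ∀ ω, Y ω = if X ω then Y1 ω else Y0 ω)
    (p1 p0 : ℝ) (hp1 : p1 = (P {ω | X ω = true}).toReal) (hp0 : p0 = 1 - p1)
    (cl cu : ℝ) (hcl : 0 < cl) (hclp1 : cl ≤ p1) (hp1cu : p1 ≤ cu) (hcu : cu < 1)
    (G1 G0 : ℝ → ℝ)
    (hG1 : ∀ y, G1 y = (P {ω | Y ω ≤ y ∧ X ω = true}).toReal / p1)
    (hG0 : ∀ y, G0 y = (P {ω | Y ω ≤ y ∧ X ω = false}).toReal / p0)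
    (Fu10 Fl10 Fu01 Fl01 : ℝ → ℝ)
    (hFu10 : ∀ y, Fu10 y = min (G1 y * p1 * (1 - cl) / (p0 * cl))
      ((cu - p1) / (cu * p0) + G1 y * p1 * (1 - cu) / (p0 * cu)))
    (hFl10 : ∀ y, Fl10 y = max (G1 y * p1 * (1 - cu) / (p0 * cu))
      ((cl - p1) / (cl * p0) + G1 y * p1 * (1 - cl) / (p0 * cl)))
    (hFu01 : ∀ y, Fu01 y = min (G0 y * p0 * cu / (p1 * (1 - cu)))
      ((p1 - cl) / ((1 - cl) * p1) + G0 y * p0 * cl / (p1 * (1 - cl))))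
    (hFl01 : ∀ y, Fl01 y = max (G0 y * p0 * cl / (p1 * (1 - cl)))
      ((p1 - cu) / ((1 - cu) * p1) + G0 y * p0 * cu / (p1 * (1 - cu)))) :
    (Monotone Fu10 ∧ (∀ y : ℝ, ContinuousWithinAt Fu10 (Set.Ici y) y) ∧
      Tendsto Fu10 atBot (𝓝 0) ∧ Tendsto Fu10 atTop (𝓝 1)) ∧
    (Monotone Fl10 ∧ (∀ y : ℝ, ContinuousWithinAt Fl10 (Set.Ici y) y) ∧
      Tendsto Fl10 atBot (𝓝 0) ∧ Tendsto Fl10 atTop (𝓝 1)) ∧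
    (Monotone Fu01 ∧ (∀ y : ℝ, ContinuousWithinAt Fu01 (Set.Ici y) y) ∧
      Tendsto Fu01 atBot (𝓝 0) ∧ Tendsto Fu01 atTop (𝓝 1)) ∧
    (Monotone Fl01 ∧ (∀ y : ℝ, ContinuousWithinAt Fl01 (Set.Ici y) y) ∧
      Tendsto Fl01 atBot (𝓝 0) ∧ Tendsto Fl01 atTop (𝓝 1)) := by
  subst hp0
  have hp1pos : 0 < p1 := hcl.trans_le hclp1
  have hp1lt : p1 < 1 := hp1cu.trans_lt hcu
  have hXt : MeasurableSet {ω | X ω = true} := hX (measurableSet_singleton true)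
  have hYm : Measurable Y := funext hY ▸ hY1.ite hXt hY0
  have hXf : {ω | X ω = false} = {ω | X ω = true}ᶜ := by ext ω; simp
  have hp0 : 1 - p1 = (P {ω | X ω = false}).toReal := by
    rw [hp1, hXf, ← measureReal_def, ← measureReal_def, probReal_compl_eq_one_sub hXt]
  have hG1cdf : IsCDF G1 := by
    rw [funext hG1, hp1]
    exact isCDF_cond_measure_le hYm hXt (ENNReal.toReal_pos_iff.1 (hp1 ▸ hp1pos)).1.ne'
  have hG0cdf : IsCDF G0 := by
    rw [funext hG0, hp0]
    exact isCDF_cond_measure_le hYm (hX (measurableSet_singleton false))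
      (ENNReal.toReal_pos_iff.1 (hp0 ▸ sub_pos.2 hp1lt)).1.ne'
  rw [funext hFu10, funext hFl10, funext hFu01, funext hFl01]
  -- The bounds for the control arm are those for the treated arm under `p ↦ 1 - p`, `c ↦ 1 - c`.
  have hcu' : 0 < 1 - cu := by linarith
  have hcl' : 1 - cl < 1 := by linarith
  have hp0cu : 1 - cu ≤ 1 - p1 := by linarith
  have hp0cl : 1 - p1 ≤ 1 - cl := by linarith
  have hFu01 : IsCDF _ := hG0cdf.min_bound hcu' hp0cu hp0cl hcl'
  have hFl01 : IsCDF _ := hG0cdf.max_bound hcu' hp0cu hp0cl hcl'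
  simp only [sub_sub_cancel, sub_sub_sub_cancel_left] at hFu01 hFl01
  exact ⟨hG1cdf.min_bound hcl hclp1 hp1cu hcu, hG1cdf.max_bound hcl hclp1 hp1cu hcu, hFu01, hFl01⟩

/-- **The counterfactual-arm bound functions are cdfs.**
Under overlap and `0 < c̲ ≤ p₁ ≤ c̄ < 1`, each of the four counterfactual-arm bound functions
`F̄₁⁰, F̲₁⁰, F̄₀¹, F̲₀¹` is nondecreasing, right-continuous, tends to `0` at `−∞` and to `1`
at `+∞`. -/
theorem counterfactual_arm_bounds_are_cdfs
    {Ω : Type*} [MeasurableSpace Ω] (P : Measure Ω) [IsProbabilityMeasure P]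
    (Y1 Y0 : Ω → ℝ) (X : Ω → Bool)
    (hY1 : Measurable Y1) (hY0 : Measurable Y0) (hX : Measurable X)
    (Y : Ω → ℝ) (hY : ∀ ω, Y ω = if X ω then Y1 ω else Y0 ω)
    (p1 p0 : ℝ) (hp1 : p1 = (P {ω | X ω = true}).toReal) (hp0 : p0 = 1 - p1)
    (hov : 0 < p1 ∧ p1 < 1)
    (cl cu : ℝ) (hcl : 0 < cl) (hclp1 : cl ≤ p1) (hp1cu : p1 ≤ cu) (hcu : cu < 1)
    (G1 G0 : ℝ → ℝ)
    (hG1 : ∀ y, G1 y = (P {ω | Y ω ≤ y ∧ X ω = true}).toReal / p1)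
    (hG0 : ∀ y, G0 y = (P {ω | Y ω ≤ y ∧ X ω = false}).toReal / p0)
    (Fu10 Fl10 Fu01 Fl01 : ℝ → ℝ)
    (hFu10 : ∀ y, Fu10 y = min (G1 y * p1 * (1 - cl) / (p0 * cl))
      ((cu - p1) / (cu * p0) + G1 y * p1 * (1 - cu) / (p0 * cu)))
    (hFl10 : ∀ y, Fl10 y = max (G1 y * p1 * (1 - cu) / (p0 * cu))
      ((cl - p1) / (cl * p0) + G1 y * p1 * (1 - cl) / (p0 * cl)))
    (hFu01 : ∀ y, Fu01 y = min (G0 y * p0 * cu / (p1 * (1 - cu)))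
      ((p1 - cl) / ((1 - cl) * p1) + G0 y * p0 * cl / (p1 * (1 - cl))))
    (hFl01 : ∀ y, Fl01 y = max (G0 y * p0 * cl / (p1 * (1 - cl)))
      ((p1 - cu) / ((1 - cu) * p1) + G0 y * p0 * cu / (p1 * (1 - cu)))) :
    (Monotone Fu10 ∧ (∀ y : ℝ, ContinuousWithinAt Fu10 (Set.Ici y) y) ∧
      Tendsto Fu10 atBot (𝓝 0) ∧ Tendsto Fu10 atTop (𝓝 1)) ∧
    (Monotone Fl10 ∧ (∀ y : ℝ, ContinuousWithinAt Fl10 (Set.Ici y) y) ∧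
      Tendsto Fl10 atBot (𝓝 0) ∧ Tendsto Fl10 atTop (𝓝 1)) ∧
    (Monotone Fu01 ∧ (∀ y : ℝ, ContinuousWithinAt Fu01 (Set.Ici y) y) ∧
      Tendsto Fu01 atBot (𝓝 0) ∧ Tendsto Fu01 atTop (𝓝 1)) ∧
    (Monotone Fl01 ∧ (∀ y : ℝ, ContinuousWithinAt Fl01 (Set.Ici y) y) ∧
      Tendsto Fl01 atBot (𝓝 0) ∧ Tendsto Fl01 atTop (𝓝 1)) :=
  counterfactual_arm_bounds_are_cdfs_general P Y1 Y0 X hY1 hY0 hX Y hY p1 p0 hp1 hp0 cl cu hcl hclp1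
    hp1cu hcu G1 G0 hG1 hG0 Fu10 Fl10 Fu01 Fl01 hFu10 hFl10 hFu01 hFl01
end
end

section
/- Characterization of latent propensity scores (univariate version). Let Z : Ω → ℝ be measurable, X : Ω → {0,1} measurable, x ∈ {0,1}, and let m : ℝ → ℝ be Borel measurable with P(m(Z) ≥ δ) = 1 for some δ > 0. Then the following are equivalent: (1) m∘Z is a version of the conditional expectation E[1{X=x} ∣ σ(Z)]; (2) for all y ∈ ℝ, E[1{Z ≤ y}·1{X=x} / m(Z)] = P(Z ≤ y). -/
open MeasureTheory Set

/-! With `f = 1{X = x}` and `h = m ∘ Z ≥ δ`, pulling the σ(Z)-measurable factor `h` out of the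
conditional expectation shows that `h` is a version of `E[f ∣ σ(Z)]` iff `E[f / h ∣ σ(Z)] = 1`,
i.e. iff `∫_A f / h dP = P(A)` for every `A ∈ σ(Z)`. As `f / h ≥ 0` is integrable, both sides are
finite measures in `A`; their images under `Z` are finite measures on `ℝ`, and these are determined
by their values on the half-lines `(-∞, y]`. -/

namespace MeasureTheory

variable {Ω : Type*} {m m₀ : MeasurableSpace Ω} {μ : Measure Ω}

theorem ae_eq_condExp_iff_condExp_div_ae_eq_one {f h : Ω → ℝ} (hh : StronglyMeasurable[m] h)
    (hh₀ : ∀ᵐ ω ∂μ, h ω ≠ 0) (hf : Integrable f μ) (hfh : Integrable (f / h) μ) :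
    h =ᵐ[μ] μ[f | m] ↔ μ[f / h | m] =ᵐ[μ] 1 := by
  have hf_eq : h * (f / h) =ᵐ[μ] f := by
    filter_upwards [hh₀] with ω hω
    exact mul_div_cancel₀ (f ω) hω
  constructor
  · intro hcond
    have hfh_eq : f / h = h⁻¹ * f := by rw [div_eq_inv_mul]
    have hpull : μ[h⁻¹ * f | m] =ᵐ[μ] h⁻¹ * μ[f | m] := condExp_mul_of_stronglyMeasurable_left
      hh.measurable.inv.stronglyMeasurable (hfh_eq ▸ hfh) hf
    rw [hfh_eq]
    filter_upwards [hpull, hcond, hh₀] with ω hpullω hcondω hω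
    simp [hpullω, ← hcondω, hω]
  · intro hone
    have hpull : μ[h * (f / h) | m] =ᵐ[μ] h * μ[f / h | m] :=
      condExp_mul_of_stronglyMeasurable_left hh (hf.congr hf_eq.symm) hfh
    filter_upwards [condExp_congr_ae (m := m) hf_eq, hpull, hone] with ω hfω hpullω hω
    simp [← hfω, hpullω, hω]

theorem Integrable.div_of_ae_le {f h : Ω → ℝ} {δ : ℝ} (hf : Integrable f μ) (hh : Measurable h)
    (hδ : 0 < δ) (hh_ge : ∀ᵐ ω ∂μ, δ ≤ h ω) : Integrable (f / h) μ := by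
  have hbound : ∀ᵐ ω ∂μ, ‖(h ω)⁻¹‖ ≤ δ⁻¹ := hh_ge.mono fun ω hω => by
    rw [norm_inv, Real.norm_eq_abs, abs_of_pos (hδ.trans_le hω)]
    exact inv_anti₀ hδ hω
  rw [div_eq_inv_mul]
  exact hf.bdd_mul hh.inv.aestronglyMeasurable hbound

theorem condExp_ae_eq_one_iff [IsFiniteMeasure μ] (hm : m ≤ m₀) {g : Ω → ℝ}
    (hg : Integrable g μ) :
    μ[g | m] =ᵐ[μ] 1 ↔ ∀ s, MeasurableSet[m] s → ∫ ω in s, g ω ∂μ = μ.real s := by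
  constructor
  · intro hone s hs
    rw [← setIntegral_condExp hm hg hs, setIntegral_congr_ae (hm s hs) (hone.mono fun _ h _ => h)]
    simp
  · intro hsets
    refine (ae_eq_condExp_of_forall_setIntegral_eq (g := fun _ => (1 : ℝ)) hm hg
      (fun _ _ _ => integrableOn_const) (fun s hs _ => ?_)
      stronglyMeasurable_const.aestronglyMeasurable).symm
    simp [hsets s hs]

theorem setIntegral_eq_measureReal_iff_withDensity_apply_eq [IsFiniteMeasure μ] {g : Ω → ℝ}
    (hg : Integrable g μ) (hg₀ : 0 ≤ᵐ[μ] g) {s : Set Ω} (hs : MeasurableSet s) :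
    ∫ ω in s, g ω ∂μ = μ.real s ↔ μ.withDensity (fun ω => ENNReal.ofReal (g ω)) s = μ s := by
  have := isFiniteMeasure_withDensity_ofReal hg.2
  rw [integral_eq_lintegral_of_nonneg_ae (ae_restrict_of_ae hg₀) hg.1.restrict,
    ← withDensity_apply _ hs, measureReal_def,
    ENNReal.toReal_eq_toReal_iff' (measure_ne_top _ s) (measure_ne_top μ s)]

theorem Measure.apply_eq_of_comap_of_forall_preimage_Iic_eq {α : Type*} [TopologicalSpace α]
    [MeasurableSpace α] [SecondCountableTopology α] [LinearOrder α] [OrderTopology α]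
    [BorelSpace α] (μ ν : Measure Ω) [IsFiniteMeasure μ] {Z : Ω → α} (hZ : Measurable Z)
    (h : ∀ y, μ (Z ⁻¹' Iic y) = ν (Z ⁻¹' Iic y)) {s : Set Ω}
    (hs : MeasurableSet[MeasurableSpace.comap Z inferInstance] s) : μ s = ν s := by
  obtain ⟨t, ht, rfl⟩ := hs
  have hmap : μ.map Z = ν.map Z :=
    Measure.ext_of_Iic _ _ fun y => by
      rw [Measure.map_apply hZ measurableSet_Iic, Measure.map_apply hZ measurableSet_Iic, h]
  rw [← Measure.map_apply hZ ht, hmap, Measure.map_apply hZ ht]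

theorem condExp_comap_ae_eq_one_iff {α : Type*} [TopologicalSpace α] [MeasurableSpace α]
    [SecondCountableTopology α] [LinearOrder α] [OrderTopology α] [BorelSpace α]
    [IsFiniteMeasure μ] {Z : Ω → α} (hZ : Measurable Z) {g : Ω → ℝ} (hg : Integrable g μ)
    (hg₀ : 0 ≤ᵐ[μ] g) :
    μ[g | MeasurableSpace.comap Z inferInstance] =ᵐ[μ] 1 ↔
      ∀ y, ∫ ω in Z ⁻¹' Iic y, g ω ∂μ = μ.real (Z ⁻¹' Iic y) := by
  have := isFiniteMeasure_withDensity_ofReal hg.2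
  rw [condExp_ae_eq_one_iff hZ.comap_le hg]
  refine ⟨fun h y => h _ (comap_measurable Z measurableSet_Iic), fun h s hs => ?_⟩
  rw [setIntegral_eq_measureReal_iff_withDensity_apply_eq hg hg₀ (hZ.comap_le s hs)]
  refine Measure.apply_eq_of_comap_of_forall_preimage_Iic_eq _ μ hZ (fun y => ?_) hs
  exact (setIntegral_eq_measureReal_iff_withDensity_apply_eq hg hg₀
    (hZ measurableSet_Iic)).mp (h y)

end MeasureTheory

/-- **Characterization of latent propensity scores (univariate version).**
Let `Z` be a real random variable, `X` a binary treatment, `x ∈ {0,1}`, and `m : ℝ → ℝ` Borel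
measurable with `P(m(Z) ≥ δ) = 1` for some `δ > 0`. Then `m ∘ Z` is a version of
`E[1{X = x} ∣ σ(Z)]` if and only if for all `y`,
`E[1{Z ≤ y} · 1{X = x} / m(Z)] = P(Z ≤ y)`. -/
theorem latent_propensity_characterization_univariate
    {Ω : Type*} [MeasurableSpace Ω] (P : Measure Ω) [IsProbabilityMeasure P]
    (Z : Ω → ℝ) (X : Ω → Bool) (hZ : Measurable Z) (hX : Measurable X)
    (x : Bool) (m : ℝ → ℝ) (hm : Measurable m)
    (δ : ℝ) (hδ : 0 < δ) (hmδ : P {ω | δ ≤ m (Z ω)} = 1) :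
    ((fun ω => m (Z ω)) =ᵐ[P]
      P[(fun ω => if X ω = x then (1:ℝ) else 0) | MeasurableSpace.comap Z inferInstance])
    ↔
    (∀ y : ℝ,
      (∫ ω, (if Z ω ≤ y ∧ X ω = x then (1:ℝ) else 0) / m (Z ω) ∂P)
        = (P {ω | Z ω ≤ y}).toReal) := by
  set f : Ω → ℝ := fun ω => if X ω = x then 1 else 0
  set h : Ω → ℝ := fun ω => m (Z ω)
  have hf_meas : Measurable f :=
    Measurable.ite (hX (measurableSet_singleton x)) measurable_const measurable_const
  have hf_mem : ∀ ω, f ω ∈ Icc (0 : ℝ) 1 := fun ω => by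
    by_cases hω : X ω = x <;> simp [f, hω]
  have hh_ge : ∀ᵐ ω ∂P, δ ≤ h ω :=
    (mem_ae_iff_prob_eq_one (hm.comp hZ measurableSet_Ici)).mpr hmδ
  have hh_ne : ∀ᵐ ω ∂P, h ω ≠ 0 := hh_ge.mono fun ω hω => (hδ.trans_le hω).ne'
  have hf : Integrable f P :=
    Integrable.of_bound hf_meas.aestronglyMeasurable 1 <| ae_of_all _ fun ω => by
      rw [Real.norm_of_nonneg (hf_mem ω).1]
      exact (hf_mem ω).2
  have hg₀ : 0 ≤ᵐ[P] f / h := hh_ge.mono fun ω hω => div_nonneg (hf_mem ω).1 (hδ.le.trans hω)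
  have hg : Integrable (f / h) P := hf.div_of_ae_le (hm.comp hZ) hδ hh_ge
  have hh : StronglyMeasurable[MeasurableSpace.comap Z inferInstance] h :=
    (hm.comp (comap_measurable Z)).stronglyMeasurable
  rw [ae_eq_condExp_iff_condExp_div_ae_eq_one hh hh_ne hf hg,
    condExp_comap_ae_eq_one_iff hZ hg hg₀]
  refine forall_congr' fun y => ?_
  have hintegrand : (Z ⁻¹' Iic y).indicator (f / h) =
      fun ω => (if Z ω ≤ y ∧ X ω = x then (1 : ℝ) else 0) / m (Z ω) := by
    ext ω
    by_cases hy : Z ω ≤ y <;> simp [f, h, hy]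
  rw [← integral_indicator (hZ measurableSet_Iic), hintegrand]
  rfl
end

section
/- Jumps of the cdf bounds at the switching quantiles. Assume overlap and 0 < c̲ < p₁ < c̄ < 1. Writing F(y−) for the left limit of a monotone function F at y, the following two-sided bounds hold: (p₁/c̄)·P(Y = Q̄₁ ∣ X=1) ≤ F̄₁(Q̄₁) − F̄₁(Q̄₁−) ≤ (p₁/c̲)·P(Y = Q̄₁ ∣ X=1); (p₁/c̄)·P(Y = Q̲₁ ∣ X=1) ≤ F̲₁(Q̲₁) − F̲₁(Q̲₁−) ≤ (p₁/c̲)·P(Y = Q̲₁ ∣ X=1); (p₀/(1−c̲))·P(Y = Q̄₀ ∣ X=0) ≤ F̄₀(Q̄₀) − F̄₀(Q̄₀−) ≤ (p₀/(1−c̄))·P(Y = Q̄₀ ∣ X=0); and (p₀/(1−c̲))·P(Y = Q̲₀ ∣ X=0) ≤ F̲₀(Q̲₀) − F̲₀(Q̲₀−) ≤ (p₀/(1−c̄))·P(Y = Q̲₀ ∣ X=0). Consequently, F̄₁ is continuous at Q̄₁ if and only if P(Y = Q̄₁ ∣ X=1) = 0, F̲₁ is continuous at Q̲₁ if and only if P(Y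 = Q̲₁ ∣ X=1) = 0, F̄₀ is continuous at Q̄₀ if and only if P(Y = Q̄₀ ∣ X=0) = 0, and F̲₀ is continuous at Q̲₀ if and only if P(Y = Q̲₀ ∣ X=0) = 0. -/
/-!
Each bound is `φ ∘ G`, where `G` is the cdf of the law of `Y` given `X` and `φ` is the minimum or
maximum of two increasing affine maps, so all difference quotients of `φ` lie between the smaller
and the larger slope. As `φ` is continuous, the left limit of `φ ∘ G` at `q` is `φ (G (q-))`; the
jump of `φ ∘ G` at `q` is thus the increment of `φ` across an interval of length
`G q - G (q-) = P(Y = q ∣ X)`. Being bi-Lipschitz, `φ` is a topological embedding, so `φ ∘ G` is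
continuous exactly where `G` is, i.e. where this conditional atom vanishes.
-/

open MeasureTheory ProbabilityTheory Set Filter Function Topology

def HasSlopesBetween (s t : ℝ) (φ : ℝ → ℝ) : Prop :=
  ∀ ⦃x y : ℝ⦄, x ≤ y → s * (y - x) ≤ φ y - φ x ∧ φ y - φ x ≤ t * (y - x)

namespace HasSlopesBetween

variable {s t : ℝ} {φ f g : ℝ → ℝ}

theorem of_sub_eq {a : ℝ} (hf : ∀ x y, f y - f x = a * (y - x)) (hs : s ≤ a) (ht : a ≤ t) :
    HasSlopesBetween s t f := fun x y hxy => by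
  rw [hf]
  exact ⟨mul_le_mul_of_nonneg_right hs (sub_nonneg.2 hxy),
    mul_le_mul_of_nonneg_right ht (sub_nonneg.2 hxy)⟩

theorem min (hf : HasSlopesBetween s t f) (hg : HasSlopesBetween s t g) :
    HasSlopesBetween s t fun x => min (f x) (g x) := fun x y hxy => by
  dsimp only
  obtain ⟨hf₁, hf₂⟩ := hf hxy
  obtain ⟨hg₁, hg₂⟩ := hg hxy
  refine ⟨le_sub_iff_add_le'.2 <| le_min ?_ ?_, ?_⟩
  · linarith [min_le_left (f x) (g x)]
  · linarith [min_le_right (f x) (g x)]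
  · rcases min_choice (f x) (g x) with h | h <;> rw [h] <;>
      linarith [min_le_left (f y) (g y), min_le_right (f y) (g y)]

theorem max (hf : HasSlopesBetween s t f) (hg : HasSlopesBetween s t g) :
    HasSlopesBetween s t fun x => max (f x) (g x) := fun x y hxy => by
  dsimp only
  obtain ⟨hf₁, hf₂⟩ := hf hxy
  obtain ⟨hg₁, hg₂⟩ := hg hxy
  refine ⟨?_, sub_le_iff_le_add.2 <| max_le ?_ ?_⟩
  · rcases max_choice (f x) (g x) with h | h <;> rw [h] <;>
      linarith [le_max_left (f y) (g y), le_max_right (f y) (g y)]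
  · linarith [le_max_left (f x) (g x)]
  · linarith [le_max_right (f x) (g x)]

theorem abs_sub_bounds (h : HasSlopesBetween s t φ) (hs : 0 ≤ s) (x y : ℝ) :
    s * |x - y| ≤ |φ x - φ y| ∧ |φ x - φ y| ≤ t * |x - y| := by
  wlog hxy : y ≤ x generalizing x y
  · rw [abs_sub_comm x, abs_sub_comm (φ x)]
    exact this y x (le_of_not_ge hxy)
  obtain ⟨h₁, h₂⟩ := h hxy
  rw [abs_of_nonneg (sub_nonneg.2 hxy), abs_of_nonneg ((mul_nonneg hs (sub_nonneg.2 hxy)).trans h₁)]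
  exact ⟨h₁, h₂⟩

theorem lipschitzWith (h : HasSlopesBetween s t φ) (hs : 0 ≤ s) :
    LipschitzWith t.toNNReal φ :=
  LipschitzWith.of_dist_le' fun x y => (h.abs_sub_bounds hs x y).2

theorem antilipschitzWith (h : HasSlopesBetween s t φ) (hs : 0 < s) :
    AntilipschitzWith s⁻¹.toNNReal φ := by
  refine AntilipschitzWith.of_le_mul_dist fun x y => ?_
  rw [Real.coe_toNNReal _ (inv_nonneg.2 hs.le), le_inv_mul_iff₀ hs]
  exact (h.abs_sub_bounds hs.le x y).1

theorem isInducing (h : HasSlopesBetween s t φ) (hs : 0 < s) : IsInducing φ :=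
  (h.antilipschitzWith hs).isInducing (h.lipschitzWith hs.le).continuous

theorem leftLim_comp (h : HasSlopesBetween s t φ) (hs : 0 ≤ s) {G : ℝ → ℝ} (hG : Monotone G)
    (q : ℝ) : leftLim (φ ∘ G) q = φ (leftLim G q) :=
  leftLim_eq_of_tendsto <|
    ((h.lipschitzWith hs).continuous.tendsto _).comp (hG.tendsto_leftLim q)

theorem jump_comp (h : HasSlopesBetween s t φ) (hs : 0 ≤ s) {G : ℝ → ℝ} (hG : Monotone G)
    (q : ℝ) :
    s * (G q - leftLim G q) ≤ φ (G q) - leftLim (φ ∘ G) q ∧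
      φ (G q) - leftLim (φ ∘ G) q ≤ t * (G q - leftLim G q) := by
  rw [h.leftLim_comp hs hG]
  exact h (hG.leftLim_le le_rfl)

end HasSlopesBetween

theorem hasSlopesBetween_min_div {p u v : ℝ} (d : ℝ) (hp : 0 ≤ p) (hu : 0 < u) (huv : u ≤ v) :
    HasSlopesBetween (p / v) (p / u) fun x => min (x * p / u) (d + x * p / v) :=
  have hslope : p / v ≤ p / u := div_le_div_of_nonneg_left hp hu huv
  (HasSlopesBetween.of_sub_eq (fun x y => by ring) hslope le_rfl).min
    (HasSlopesBetween.of_sub_eq (fun x y => by ring) le_rfl hslope)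

theorem hasSlopesBetween_max_div {p u v : ℝ} (d : ℝ) (hp : 0 ≤ p) (hu : 0 < u) (huv : u ≤ v) :
    HasSlopesBetween (p / v) (p / u) fun x => max (x * p / v) (d + x * p / u) :=
  have hslope : p / v ≤ p / u := div_le_div_of_nonneg_left hp hu huv
  (HasSlopesBetween.of_sub_eq (fun x y => by ring) le_rfl hslope).max
    (HasSlopesBetween.of_sub_eq (fun x y => by ring) hslope le_rfl)

namespace StieltjesFunction

theorem sub_leftLim_eq_measureReal (f : StieltjesFunction ℝ) (a : ℝ) :
    f a - leftLim f a = f.measure.real {a} := by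
  rw [measureReal_def, f.measure_singleton,
    ENNReal.toReal_ofReal (sub_nonneg.2 (f.mono.leftLim_le le_rfl))]

theorem continuousAt_iff_measure_singleton_eq_zero (f : StieltjesFunction ℝ) (a : ℝ) :
    ContinuousAt f a ↔ f.measure {a} = 0 := by
  rw [f.mono.continuousAt_iff_leftLim_eq_rightLim, f.rightLim_eq, f.measure_singleton,
    ENNReal.ofReal_eq_zero, sub_nonpos]
  exact ⟨fun h => h.ge, fun h => le_antisymm (f.mono.leftLim_le le_rfl) h⟩

end StieltjesFunction

theorem HasSlopesBetween.jump_comp_cdf {s t : ℝ} {φ : ℝ → ℝ} (h : HasSlopesBetween s t φ)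
    (hs : 0 < s) (ν : Measure ℝ) [IsProbabilityMeasure ν] (F : ℝ → ℝ)
    (hF : ∀ y, F y = φ (cdf ν y)) (q : ℝ) :
    (s * ν.real {q} ≤ F q - leftLim F q ∧ F q - leftLim F q ≤ t * ν.real {q}) ∧
      (ContinuousAt F q ↔ ν.real {q} = 0) := by
  obtain rfl : F = φ ∘ cdf ν := funext hF
  have hjump : cdf ν q - leftLim (cdf ν) q = ν.real {q} := by
    rw [(cdf ν).sub_leftLim_eq_measureReal, measure_cdf]
  refine ⟨hjump ▸ h.jump_comp hs.le (cdf ν).mono q, ?_⟩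
  rw [← (h.isInducing hs).continuousAt_iff,
    (cdf ν).continuousAt_iff_measure_singleton_eq_zero, measure_cdf, measureReal_eq_zero_iff]

noncomputable def condLaw {Ω β γ : Type*} [MeasurableSpace Ω] [MeasurableSpace γ]
    (P : Measure Ω) (X : Ω → β) (b : β) (Y : Ω → γ) : Measure γ :=
  (P[|X ⁻¹' {b}]).map Y

section condLaw

variable {Ω β γ : Type*} [MeasurableSpace Ω] [MeasurableSpace γ] {P : Measure Ω} {X : Ω → β}
  {Y : Ω → γ}

theorem isProbabilityMeasure_condLaw [IsFiniteMeasure P] (hY : Measurable Y) {b : β}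
    (hb : P {ω | X ω = b} ≠ 0) : IsProbabilityMeasure (condLaw P X b Y) :=
  haveI := cond_isProbabilityMeasure (μ := P) (s := X ⁻¹' {b}) hb
  Measure.isProbabilityMeasure_map hY.aemeasurable

variable [MeasurableSpace β] [MeasurableSingletonClass β]

theorem condLaw_real_apply (hX : Measurable X) (hY : Measurable Y) (b : β) {B : Set γ}
    (hB : MeasurableSet B) :
    (condLaw P X b Y).real B = (P {ω | Y ω ∈ B ∧ X ω = b}).toReal / (P {ω | X ω = b}).toReal := by
  rw [condLaw, measureReal_def, Measure.map_apply hY hB,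
    cond_apply (hX (measurableSet_singleton b)), ENNReal.toReal_mul, ENNReal.toReal_inv,
    inv_mul_eq_div, inter_comm]
  rfl

theorem condLaw_real_singleton [MeasurableSingletonClass γ] (hX : Measurable X)
    (hY : Measurable Y) (b : β) (q : γ) :
    (condLaw P X b Y).real {q} =
      (P {ω | Y ω = q ∧ X ω = b}).toReal / (P {ω | X ω = b}).toReal :=
  condLaw_real_apply hX hY b (measurableSet_singleton q)

end condLaw

section condCdf

variable {Ω β : Type*} [MeasurableSpace Ω] [MeasurableSpace β] [MeasurableSingletonClass β]
  {P : Measure Ω} [IsFiniteMeasure P] {X : Ω → β} {Y : Ω → ℝ}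

theorem cdf_condLaw_apply (hX : Measurable X) (hY : Measurable Y) {b : β}
    (hb : P {ω | X ω = b} ≠ 0) (y : ℝ) :
    cdf (condLaw P X b Y) y = (P {ω | Y ω ≤ y ∧ X ω = b}).toReal / (P {ω | X ω = b}).toReal := by
  have := isProbabilityMeasure_condLaw hY hb
  rw [cdf_eq_real, condLaw_real_apply hX hY b measurableSet_Iic]
  rfl

theorem HasSlopesBetween.jump_comp_condCdf {s t : ℝ} {φ : ℝ → ℝ} (h : HasSlopesBetween s t φ)
    (hs : 0 < s) (hX : Measurable X) (hY : Measurable Y) {b : β} (hb : P {ω | X ω = b} ≠ 0)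
    (F : ℝ → ℝ)
    (hF : ∀ y, F y = φ ((P {ω | Y ω ≤ y ∧ X ω = b}).toReal / (P {ω | X ω = b}).toReal))
    (q : ℝ) :
    (s * ((P {ω | Y ω = q ∧ X ω = b}).toReal / (P {ω | X ω = b}).toReal) ≤ F q - leftLim F q ∧
      F q - leftLim F q ≤ t * ((P {ω | Y ω = q ∧ X ω = b}).toReal / (P {ω | X ω = b}).toReal)) ∧
      (ContinuousAt F q ↔ (P {ω | Y ω = q ∧ X ω = b}).toReal / (P {ω | X ω = b}).toReal = 0) := by
  have := isProbabilityMeasure_condLaw hY hb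
  rw [← condLaw_real_singleton hX hY b q]
  exact h.jump_comp_cdf hs _ F (fun y => by rw [hF, cdf_condLaw_apply hX hY hb]) q

end condCdf

theorem toReal_measure_setOf_eq_false {Ω : Type*} [MeasurableSpace Ω] {P : Measure Ω}
    [IsProbabilityMeasure P] {X : Ω → Bool} (hX : Measurable X) :
    (P {ω | X ω = false}).toReal = 1 - (P {ω | X ω = true}).toReal := by
  have hcompl : {ω | X ω = false} = {ω | X ω = true}ᶜ := by ext; simp
  rw [hcompl, ← measureReal_def, ← measureReal_def,
    probReal_compl_eq_one_sub (μ := P) (s := {ω | X ω = true}) (hX (measurableSet_singleton true))]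

theorem cdf_bound_jumps_at_switching_quantiles_general
    {Ω : Type*} [MeasurableSpace Ω] (P : Measure Ω) [IsProbabilityMeasure P]
    (Y1 Y0 : Ω → ℝ) (X : Ω → Bool)
    (hY1 : Measurable Y1) (hY0 : Measurable Y0) (hX : Measurable X)
    (Y : Ω → ℝ) (hY : ∀ ω, Y ω = if X ω then Y1 ω else Y0 ω)
    (p1 p0 : ℝ) (hp1 : p1 = (P {ω | X ω = true}).toReal) (hp0 : p0 = 1 - p1)
    (cl cu : ℝ) (hcl : 0 < cl) (hclp1 : cl < p1) (hp1cu : p1 < cu) (hcu : cu < 1)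
    (G1 G0 : ℝ → ℝ)
    (hG1 : ∀ y, G1 y = (P {ω | Y ω ≤ y ∧ X ω = true}).toReal / p1)
    (hG0 : ∀ y, G0 y = (P {ω | Y ω ≤ y ∧ X ω = false}).toReal / p0)
    (Fu1 Fl1 Fu0 Fl0 : ℝ → ℝ)
    (hFu1 : ∀ y, Fu1 y = min (G1 y * p1 / cl) ((cu - p1) / cu + G1 y * p1 / cu))
    (hFl1 : ∀ y, Fl1 y = max (G1 y * p1 / cu) ((cl - p1) / cl + G1 y * p1 / cl))
    (hFu0 : ∀ y, Fu0 y = min (G0 y * p0 / (1 - cu)) ((p1 - cl) / (1 - cl) + G0 y * p0 / (1 - cl)))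
    (hFl0 : ∀ y, Fl0 y = max (G0 y * p0 / (1 - cl)) ((p1 - cu) / (1 - cu) + G0 y * p0 / (1 - cu)))
    -- thresholds and switching quantiles
    (Ql1 Qu1 Ql0 Qu0 : ℝ) :
    ((p1 / cu) * ((P {ω | Y ω = Qu1 ∧ X ω = true}).toReal / p1)
        ≤ Fu1 Qu1 - Function.leftLim Fu1 Qu1 ∧
      Fu1 Qu1 - Function.leftLim Fu1 Qu1
        ≤ (p1 / cl) * ((P {ω | Y ω = Qu1 ∧ X ω = true}).toReal / p1)) ∧
    ((p1 / cu) * ((P {ω | Y ω = Ql1 ∧ X ω = true}).toReal / p1)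
        ≤ Fl1 Ql1 - Function.leftLim Fl1 Ql1 ∧
      Fl1 Ql1 - Function.leftLim Fl1 Ql1
        ≤ (p1 / cl) * ((P {ω | Y ω = Ql1 ∧ X ω = true}).toReal / p1)) ∧
    ((p0 / (1 - cl)) * ((P {ω | Y ω = Qu0 ∧ X ω = false}).toReal / p0)
        ≤ Fu0 Qu0 - Function.leftLim Fu0 Qu0 ∧
      Fu0 Qu0 - Function.leftLim Fu0 Qu0
        ≤ (p0 / (1 - cu)) * ((P {ω | Y ω = Qu0 ∧ X ω = false}).toReal / p0)) ∧
    ((p0 / (1 - cl)) * ((P {ω | Y ω = Ql0 ∧ X ω = false}).toReal / p0)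
        ≤ Fl0 Ql0 - Function.leftLim Fl0 Ql0 ∧
      Fl0 Ql0 - Function.leftLim Fl0 Ql0
        ≤ (p0 / (1 - cu)) * ((P {ω | Y ω = Ql0 ∧ X ω = false}).toReal / p0)) ∧
    (ContinuousAt Fu1 Qu1 ↔ (P {ω | Y ω = Qu1 ∧ X ω = true}).toReal / p1 = 0) ∧
    (ContinuousAt Fl1 Ql1 ↔ (P {ω | Y ω = Ql1 ∧ X ω = true}).toReal / p1 = 0) ∧
    (ContinuousAt Fu0 Qu0 ↔ (P {ω | Y ω = Qu0 ∧ X ω = false}).toReal / p0 = 0) ∧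
    (ContinuousAt Fl0 Ql0 ↔ (P {ω | Y ω = Ql0 ∧ X ω = false}).toReal / p0 = 0) := by
  have hp1pos : 0 < p1 := hcl.trans hclp1
  have hp0pos : 0 < p0 := by linarith
  have hcc1 : cl ≤ cu := (hclp1.trans hp1cu).le
  have hcc0 : 1 - cu ≤ 1 - cl := by linarith
  have hcu0 : 0 < 1 - cu := by linarith
  have hs1 : 0 < p1 / cu := div_pos hp1pos (hcl.trans_le hcc1)
  have hs0 : 0 < p0 / (1 - cl) := div_pos hp0pos (hcu0.trans_le hcc0)
  have hYm : Measurable Y := by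
    rw [funext hY]
    exact Measurable.ite (hX (measurableSet_singleton true)) hY1 hY0
  rw [hp1, ← toReal_measure_setOf_eq_false hX] at hp0
  subst hp1 hp0
  have hb1 := (ENNReal.toReal_pos_iff.1 hp1pos).1.ne'
  have hb0 := (ENNReal.toReal_pos_iff.1 hp0pos).1.ne'
  obtain ⟨ju1, cu1⟩ := (hasSlopesBetween_min_div _ hp1pos.le hcl hcc1).jump_comp_condCdf hs1 hX hYm
    hb1 Fu1 (fun y => by rw [hFu1, hG1]) Qu1
  obtain ⟨jl1, cl1⟩ := (hasSlopesBetween_max_div _ hp1pos.le hcl hcc1).jump_comp_condCdf hs1 hX hYm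
    hb1 Fl1 (fun y => by rw [hFl1, hG1]) Ql1
  obtain ⟨ju0, cu0⟩ := (hasSlopesBetween_min_div _ hp0pos.le hcu0 hcc0).jump_comp_condCdf hs0 hX hYm
    hb0 Fu0 (fun y => by rw [hFu0, hG0]) Qu0
  obtain ⟨jl0, cl0⟩ := (hasSlopesBetween_max_div _ hp0pos.le hcu0 hcc0).jump_comp_condCdf hs0 hX hYm
    hb0 Fl0 (fun y => by rw [hFl0, hG0]) Ql0
  exact ⟨ju1, jl1, ju0, jl0, cu1, cl1, cu0, cl0⟩

/-- **Jumps of the cdf bounds at the switching quantiles.**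
Under overlap and `0 < c̲ < p₁ < c̄ < 1`, the jump of each cdf bound at its switching quantile
is sandwiched between explicit multiples of the conditional point mass of `Y` there; hence each
bound is continuous at its switching quantile iff the corresponding conditional point mass
vanishes. -/
theorem cdf_bound_jumps_at_switching_quantiles
    {Ω : Type*} [MeasurableSpace Ω] (P : Measure Ω) [IsProbabilityMeasure P]
    (Y1 Y0 : Ω → ℝ) (X : Ω → Bool)
    (hY1 : Measurable Y1) (hY0 : Measurable Y0) (hX : Measurable X)
    (Y : Ω → ℝ) (hY : ∀ ω, Y ω = if X ω then Y1 ω else Y0 ω)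
    (p1 p0 : ℝ) (hp1 : p1 = (P {ω | X ω = true}).toReal) (hp0 : p0 = 1 - p1)
    (hov : 0 < p1 ∧ p1 < 1)
    (cl cu : ℝ) (hcl : 0 < cl) (hclp1 : cl < p1) (hp1cu : p1 < cu) (hcu : cu < 1)
    (G1 G0 : ℝ → ℝ)
    (hG1 : ∀ y, G1 y = (P {ω | Y ω ≤ y ∧ X ω = true}).toReal / p1)
    (hG0 : ∀ y, G0 y = (P {ω | Y ω ≤ y ∧ X ω = false}).toReal / p0)
    (Fu1 Fl1 Fu0 Fl0 : ℝ → ℝ)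
    (hFu1 : ∀ y, Fu1 y = min (G1 y * p1 / cl) ((cu - p1) / cu + G1 y * p1 / cu))
    (hFl1 : ∀ y, Fl1 y = max (G1 y * p1 / cu) ((cl - p1) / cl + G1 y * p1 / cl))
    (hFu0 : ∀ y, Fu0 y = min (G0 y * p0 / (1 - cu)) ((p1 - cl) / (1 - cl) + G0 y * p0 / (1 - cl)))
    (hFl0 : ∀ y, Fl0 y = max (G0 y * p0 / (1 - cl)) ((p1 - cu) / (1 - cu) + G0 y * p0 / (1 - cu)))
    -- thresholds and switching quantiles
    (τl1 τu1 τl0 τu0 Ql1 Qu1 Ql0 Qu0 : ℝ)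
    (hτl1 : τl1 = (p1 - cl) * cu / (p1 * (cu - cl))) (hτu1 : τu1 = 1 - τl1)
    (hQl1 : Ql1 = sInf {y : ℝ | τl1 ≤ G1 y}) (hQu1 : Qu1 = sInf {y : ℝ | τu1 ≤ G1 y})
    (hτl0 : τl0 = (cu - p1) * (1 - cl) / (p0 * (cu - cl))) (hτu0 : τu0 = 1 - τl0)
    (hQl0 : Ql0 = sInf {y : ℝ | τl0 ≤ G0 y}) (hQu0 : Qu0 = sInf {y : ℝ | τu0 ≤ G0 y}) :
    ((p1 / cu) * ((P {ω | Y ω = Qu1 ∧ X ω = true}).toReal / p1)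
        ≤ Fu1 Qu1 - Function.leftLim Fu1 Qu1 ∧
      Fu1 Qu1 - Function.leftLim Fu1 Qu1
        ≤ (p1 / cl) * ((P {ω | Y ω = Qu1 ∧ X ω = true}).toReal / p1)) ∧
    ((p1 / cu) * ((P {ω | Y ω = Ql1 ∧ X ω = true}).toReal / p1)
        ≤ Fl1 Ql1 - Function.leftLim Fl1 Ql1 ∧
      Fl1 Ql1 - Function.leftLim Fl1 Ql1
        ≤ (p1 / cl) * ((P {ω | Y ω = Ql1 ∧ X ω = true}).toReal / p1)) ∧
    ((p0 / (1 - cl)) * ((P {ω | Y ω = Qu0 ∧ X ω = false}).toReal / p0)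
        ≤ Fu0 Qu0 - Function.leftLim Fu0 Qu0 ∧
      Fu0 Qu0 - Function.leftLim Fu0 Qu0
        ≤ (p0 / (1 - cu)) * ((P {ω | Y ω = Qu0 ∧ X ω = false}).toReal / p0)) ∧
    ((p0 / (1 - cl)) * ((P {ω | Y ω = Ql0 ∧ X ω = false}).toReal / p0)
        ≤ Fl0 Ql0 - Function.leftLim Fl0 Ql0 ∧
      Fl0 Ql0 - Function.leftLim Fl0 Ql0
        ≤ (p0 / (1 - cu)) * ((P {ω | Y ω = Ql0 ∧ X ω = false}).toReal / p0)) ∧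
    (ContinuousAt Fu1 Qu1 ↔ (P {ω | Y ω = Qu1 ∧ X ω = true}).toReal / p1 = 0) ∧
    (ContinuousAt Fl1 Ql1 ↔ (P {ω | Y ω = Ql1 ∧ X ω = true}).toReal / p1 = 0) ∧
    (ContinuousAt Fu0 Qu0 ↔ (P {ω | Y ω = Qu0 ∧ X ω = false}).toReal / p0 = 0) ∧
    (ContinuousAt Fl0 Ql0 ↔ (P {ω | Y ω = Ql0 ∧ X ω = false}).toReal / p0 = 0) :=
  cdf_bound_jumps_at_switching_quantiles_general P Y1 Y0 X hY1 hY0 hX Y hY p1 p0 hp1 hp0 cl cu hcl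
    hclp1 hp1cu hcu G1 G0 hG1 hG0 Fu1 Fl1 Fu0 Fl0 hFu1 hFl1 hFu0 hFl0 Ql1 Qu1 Ql0 Qu0
end

section
/- The switching latent propensity score generates the upper cdf bound. Assume overlap and 0 < c̲ < p₁ < c̄ < 1. Define Ā₁ = P(Y = Q̄₁, X = 1) / (F̄₁(Q̄₁) − F̄₁(Q̄₁−)) when the denominator is nonzero and Ā₁ = p₁ otherwise, and define p̄₁ : ℝ → ℝ by p̄₁(y) = c̲ if y < Q̄₁, p̄₁(y) = Ā₁ if y = Q̄₁, and p̄₁(y) = c̄ if y > Q̄₁. Then Ā₁ ∈ [c̲, c̄], and for every y ∈ ℝ, E[1{Y ≤ y}·1{X=1} / p̄₁(Y)] = F̄₁(y). -/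
open MeasureTheory ProbabilityTheory Set Filter Function
open scoped Topology

noncomputable section

/-!
Conditionally on `X = 1`, `Y` has a law `ν` with cdf `G₁`, and `F̄₁ = φ ∘ G₁` for the concave
piecewise-linear map `φ`, whose two pieces (slopes `p₁ / c̲` and `p₁ / c̄`) cross exactly at
`τ̄₁`. So `F̄₁ = p₁ G₁ / c̲` strictly below the quantile `Q̄₁` and
`F̄₁ = (c̄ - p₁) / c̄ + p₁ G₁ / c̄` from `Q̄₁` on. The expectation is `p₁` times the
`ν`-integral of `1 / p̄₁` over `(-∞, y]`, which splits into the mass below `Q̄₁` weighted by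
`1 / c̲`, the atom at `Q̄₁` weighted by `1 / Ā₁` and the mass in `(Q̄₁, y]` weighted by `1 / c̄`;
`Ā₁` is exactly the weight making the atom term the jump of `F̄₁` at `Q̄₁`. Since `φ` has slopes
between `p₁ / c̄` and `p₁ / c̲`, that jump lies between `p₁ ν{Q̄₁} / c̄` and `p₁ ν{Q̄₁} / c̲`,
which gives `Ā₁ ∈ [c̲, c̄]`.
-/

theorem Monotone.leftLim_comp {α β γ : Type*} [LinearOrder α] [TopologicalSpace α] [OrderTopology α]
    [ConditionallyCompleteLinearOrder β] [TopologicalSpace β] [OrderTopology β]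
    [TopologicalSpace γ] [T2Space γ] {f : α → β} (hf : Monotone f) {g : β → γ} {x : α}
    [(𝓝[<] x).NeBot] (hg : ContinuousAt g (leftLim f x)) :
    leftLim (g ∘ f) x = g (leftLim f x) :=
  leftLim_eq_of_tendsto (hg.tendsto.comp (hf.tendsto_leftLim x))

namespace ProbabilityTheory

section cdf

variable (μ : Measure ℝ)

lemma leftLim_cdf_nonneg (x : ℝ) : 0 ≤ leftLim (cdf μ) x :=
  (cdf_nonneg μ _).trans ((monotone_cdf μ).le_leftLim (sub_one_lt x))

def quantile (τ : ℝ) : ℝ := sInf {y | τ ≤ cdf μ y}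

variable {μ} {τ : ℝ}

lemma bddBelow_setOf_le_cdf (hτ : 0 < τ) : BddBelow {y | τ ≤ cdf μ y} := by
  obtain ⟨y₀, hy₀⟩ := ((tendsto_cdf_atBot μ).eventually (eventually_lt_nhds hτ)).exists
  exact ⟨y₀, fun y hy => le_of_not_gt fun hlt => (hy₀.trans_le' (monotone_cdf μ hlt.le)).not_ge hy⟩

lemma cdf_lt_of_lt_quantile (hτ : 0 < τ) {y : ℝ} (hy : y < quantile μ τ) : cdf μ y < τ :=
  lt_of_not_ge fun h => (csInf_le (bddBelow_setOf_le_cdf hτ) h).not_gt hy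

lemma le_cdf_of_quantile_lt (hτ : τ < 1) {y : ℝ} (hy : quantile μ τ < y) : τ ≤ cdf μ y := by
  have hne : {y | τ ≤ cdf μ y}.Nonempty :=
    ((tendsto_cdf_atTop μ).eventually (eventually_ge_nhds hτ)).exists
  obtain ⟨z, hz, hzy⟩ := exists_lt_of_csInf_lt hne hy
  exact hz.trans (monotone_cdf μ hzy.le)

lemma le_cdf_quantile (hτ : τ < 1) : τ ≤ cdf μ (quantile μ τ) :=
  ge_of_tendsto (((cdf μ).right_continuous _).mono_left (nhdsWithin_mono _ Ioi_subset_Ici_self))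
    (eventually_nhdsWithin_of_forall fun _ hy => le_cdf_of_quantile_lt hτ hy)

lemma leftLim_cdf_quantile_le (hτ : 0 < τ) : leftLim (cdf μ) (quantile μ τ) ≤ τ :=
  le_of_tendsto ((monotone_cdf μ).tendsto_leftLim _)
    (eventually_nhdsWithin_of_forall fun _ hy => (cdf_lt_of_lt_quantile hτ hy).le)

variable (μ) [IsProbabilityMeasure μ]

lemma measureReal_Iio_eq_leftLim_cdf (x : ℝ) : μ.real (Iio x) = leftLim (cdf μ) x := by
  have h := (cdf μ).measure_Iio (tendsto_cdf_atBot μ) x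
  rw [measure_cdf, sub_zero] at h
  rw [measureReal_def, h, ENNReal.toReal_ofReal (leftLim_cdf_nonneg μ x)]

lemma measureReal_singleton_eq_cdf_sub_leftLim (x : ℝ) :
    μ.real {x} = cdf μ x - leftLim (cdf μ) x := by
  have h := (cdf μ).measure_singleton x
  rw [measure_cdf] at h
  rw [measureReal_def, h, ENNReal.toReal_ofReal (sub_nonneg.2 ((monotone_cdf μ).leftLim_le le_rfl))]

lemma measureReal_Ioc_eq_cdf_sub_cdf {x y : ℝ} (hxy : x ≤ y) :
    μ.real (Ioc x y) = cdf μ y - cdf μ x := by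
  have h := (cdf μ).measure_Ioc x y
  rw [measure_cdf] at h
  rw [measureReal_def, h, ENNReal.toReal_ofReal (sub_nonneg.2 (monotone_cdf μ hxy))]

end cdf

section cond

variable {Ω : Type*} [MeasurableSpace Ω] (P : Measure Ω) [IsFiniteMeasure P] {s : Set Ω}

lemma restrict_eq_smul_cond : P.restrict s = P s • P[|s] := by
  rcases eq_or_ne (P s) 0 with h | h
  · simp [h]
  · rw [cond, smul_smul, ENNReal.mul_inv_cancel h (measure_ne_top P s), one_smul]

lemma measureReal_preimage_inter_eq_mul_map_cond (hs : MeasurableSet s) {Y : Ω → ℝ}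
    (hY : Measurable Y) {B : Set ℝ} (hB : MeasurableSet B) :
    P.real (Y ⁻¹' B ∩ s) = P.real s * ((P[|s]).map Y).real B := by
  rw [map_measureReal_apply hY hB, inter_comm, measureReal_def, measureReal_def, measureReal_def,
    ← cond_mul_eq_inter hs, ENNReal.toReal_mul, mul_comm]

lemma cdf_map_cond (hs : MeasurableSet s) (hs0 : P s ≠ 0) {Y : Ω → ℝ} (hY : Measurable Y)
    (y : ℝ) : cdf ((P[|s]).map Y) y = P.real (Y ⁻¹' Iic y ∩ s) / P.real s := by
  have := cond_isProbabilityMeasure hs0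
  have := Measure.isProbabilityMeasure_map (μ := P[|s]) hY.aemeasurable
  rw [cdf_eq_real, measureReal_preimage_inter_eq_mul_map_cond P hs hY measurableSet_Iic,
    mul_div_cancel_left₀ _ (measureReal_ne_zero_iff (measure_ne_top P s) |>.2 hs0)]

lemma integral_ite_div_comp_eq_mul_setIntegral_map_cond [DecidablePred (· ∈ s)]
    (hs : MeasurableSet s) {Y : Ω → ℝ}
    (hY : Measurable Y) {g : ℝ → ℝ} (hg : Measurable g) (y : ℝ) :
    ∫ ω, (if Y ω ≤ y ∧ ω ∈ s then (1:ℝ) else 0) / g (Y ω) ∂P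
      = P.real s * ∫ x in Iic y, (g x)⁻¹ ∂(P[|s]).map Y := by
  calc ∫ ω, (if Y ω ≤ y ∧ ω ∈ s then (1:ℝ) else 0) / g (Y ω) ∂P
      = ∫ ω, s.indicator (fun ω => (Iic y).indicator (fun x => (g x)⁻¹) (Y ω)) ω ∂P := by
        congr 1 with ω
        by_cases hω : ω ∈ s <;> by_cases hy : Y ω ≤ y <;> simp [hω, hy]
    _ = P.real s * ∫ ω, (Iic y).indicator (fun x => (g x)⁻¹) (Y ω) ∂P[|s] := by
        rw [integral_indicator hs, restrict_eq_smul_cond, integral_smul_measure, smul_eq_mul,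
          measureReal_def]
    _ = P.real s * ∫ x in Iic y, (g x)⁻¹ ∂(P[|s]).map Y := by
        rw [← integral_map (f := (Iic y).indicator fun x => (g x)⁻¹) hY.aemeasurable
          (hg.inv.indicator measurableSet_Iic).aestronglyMeasurable,
          integral_indicator measurableSet_Iic]

end cond

end ProbabilityTheory

/-- `F̄₁ = upperCDF p₁ c̲ c̄ ∘ G₁`; its two pieces cross at `τ̄₁ = upperCDFKink p₁ c̲ c̄`. -/
def upperCDF (p cl cu g : ℝ) : ℝ := min (g * p / cl) ((cu - p) / cu + g * p / cu)

def upperCDFKink (p cl cu : ℝ) : ℝ := (cu - p) * cl / (p * (cu - cl))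

section upperCDF

variable {p cl cu : ℝ}

lemma continuous_upperCDF : Continuous (upperCDF p cl cu) := by
  unfold upperCDF; fun_prop

lemma upperCDFKink_pos (hcl : 0 < cl) (hclp : cl < p) (hpcu : p < cu) :
    0 < upperCDFKink p cl cu := by
  have := sub_pos.2 hpcu; have := sub_pos.2 (hclp.trans hpcu); have := hcl.trans hclp
  unfold upperCDFKink; positivity

lemma upperCDFKink_lt_one (hcl : 0 < cl) (hclp : cl < p) (hpcu : p < cu) :
    upperCDFKink p cl cu < 1 := by
  rw [upperCDFKink, div_lt_one (by nlinarith)]; nlinarith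

lemma upperCDF_of_le (hp : 0 < p) (hcl : 0 < cl) (hclcu : cl < cu) {g : ℝ}
    (hg : g ≤ upperCDFKink p cl cu) : upperCDF p cl cu g = g * p / cl := by
  rw [upperCDFKink, le_div_iff₀ (by nlinarith)] at hg
  refine min_eq_left ?_
  rw [← add_div, div_le_div_iff₀ hcl (by linarith)]
  nlinarith

lemma upperCDF_of_ge (hp : 0 < p) (hcl : 0 < cl) (hclcu : cl < cu) {g : ℝ}
    (hg : upperCDFKink p cl cu ≤ g) : upperCDF p cl cu g = (cu - p) / cu + g * p / cu := by
  rw [upperCDFKink, div_le_iff₀ (by nlinarith)] at hg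
  refine min_eq_right ?_
  rw [← add_div, div_le_div_iff₀ (by linarith) hcl]
  nlinarith

lemma mul_upperCDF_sub_le (hp : 0 ≤ p) (hcl : 0 < cl) (hclcu : cl ≤ cu) {a b : ℝ} (hab : a ≤ b) :
    cl * (upperCDF p cl cu b - upperCDF p cl cu a) ≤ p * (b - a) := by
  rw [← le_div_iff₀' hcl]
  unfold upperCDF
  rcases min_choice (a * p / cl) ((cu - p) / cu + a * p / cu) with h | h <;> rw [h]
  · calc _ ≤ b * p / cl - a * p / cl := sub_le_sub_right (min_le_left _ _) _
      _ = p * (b - a) / cl := by ring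
  · calc _ ≤ (cu - p) / cu + b * p / cu - ((cu - p) / cu + a * p / cu) :=
          sub_le_sub_right (min_le_right _ _) _
      _ = p * (b - a) / cu := by ring
      _ ≤ p * (b - a) / cl := div_le_div_of_nonneg_left (by nlinarith) hcl hclcu

lemma le_mul_upperCDF_sub (hp : 0 ≤ p) (hcl : 0 < cl) (hclcu : cl ≤ cu) {a b : ℝ} (hab : a ≤ b) :
    p * (b - a) ≤ cu * (upperCDF p cl cu b - upperCDF p cl cu a) := by
  rw [← div_le_iff₀' (hcl.trans_le hclcu)]
  unfold upperCDF
  rcases min_choice (b * p / cl) ((cu - p) / cu + b * p / cu) with h | h <;> rw [h]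
  · calc p * (b - a) / cu ≤ p * (b - a) / cl :=
          div_le_div_of_nonneg_left (by nlinarith) hcl hclcu
      _ = b * p / cl - a * p / cl := by ring
      _ ≤ _ := sub_le_sub_left (min_le_left _ _) _
  · calc p * (b - a) / cu = (cu - p) / cu + b * p / cu - ((cu - p) / cu + a * p / cu) := by
          ring
      _ ≤ _ := sub_le_sub_left (min_le_right _ _) _

end upperCDF

lemma ite_div_mem_Icc_and_div_eq {cl cu J m p : ℝ} (hcl : 0 < cl) (hJm : cl * J ≤ m)
    (hmJ : m ≤ cu * J) (hp : p ∈ Icc cl cu) :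
    (if J ≠ 0 then m / J else p) ∈ Icc cl cu ∧ m / (if J ≠ 0 then m / J else p) = J := by
  have hclcu : cl ≤ cu := hp.1.trans hp.2
  split_ifs with hJ
  · have hm : m ≠ 0 := by
      rintro rfl
      rcases hJ.lt_or_gt with hJ | hJ <;> nlinarith
    refine ⟨?_, div_div_cancel₀ hm⟩
    rcases hJ.lt_or_gt with hJ | hJ
    · rw [mem_Icc, le_div_iff_of_neg hJ, div_le_iff_of_neg hJ]
      constructor <;> nlinarith
    · rw [mem_Icc, le_div_iff₀ hJ, div_le_iff₀ hJ]
      constructor <;> linarith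
  · obtain rfl : J = 0 := not_not.1 hJ
    have hm : m = 0 := le_antisymm (by simpa using hmJ) (by simpa using hJm)
    exact ⟨hp, by rw [hm, zero_div]⟩

def threeStep (q a b c x : ℝ) : ℝ := if x < q then a else if x = q then b else c

section threeStep

variable {q a b c : ℝ}

lemma inv_threeStep (x : ℝ) : (threeStep q a b c x)⁻¹ = threeStep q a⁻¹ b⁻¹ c⁻¹ x := by
  unfold threeStep; split_ifs <;> rfl

lemma measurable_threeStep : Measurable (threeStep q a b c) :=
  Measurable.ite measurableSet_Iio measurable_const
    (Measurable.ite (measurableSet_singleton q) measurable_const measurable_const)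

variable (μ : Measure ℝ) {y : ℝ}

lemma setIntegral_Iic_threeStep_of_lt (hy : y < q) :
    ∫ x in Iic y, threeStep q a b c x ∂μ = μ.real (Iic y) * a := by
  rw [setIntegral_congr_fun measurableSet_Iic fun x (hx : x ≤ y) => by
    rw [threeStep, if_pos (hx.trans_lt hy)], setIntegral_const, smul_eq_mul]

variable [IsFiniteMeasure μ]

lemma integrable_threeStep : Integrable (threeStep q a b c) μ :=
  Integrable.of_bound measurable_threeStep.aestronglyMeasurable (|a| + |b| + |c|) <|
    ae_of_all _ fun x => by
      unfold threeStep
      split_ifs <;> simp only [Real.norm_eq_abs] <;>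
        linarith [abs_nonneg a, abs_nonneg b, abs_nonneg c]

lemma setIntegral_Iic_threeStep_of_le (hy : q ≤ y) :
    ∫ x in Iic y, threeStep q a b c x ∂μ
      = μ.real (Iio q) * a + μ.real {q} * b + μ.real (Ioc q y) * c := by
  have hIio : ∫ x in Iio q, threeStep q a b c x ∂μ = μ.real (Iio q) * a := by
    rw [setIntegral_congr_fun measurableSet_Iio fun x (hx : x < q) => by rw [threeStep, if_pos hx],
      setIntegral_const, smul_eq_mul]
  have hq : ∫ x in {q}, threeStep q a b c x ∂μ = μ.real {q} * b := by
    rw [setIntegral_congr_fun (measurableSet_singleton q) fun x (hx : x = q) => by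
      rw [threeStep, if_neg (not_lt.2 hx.ge), if_pos hx], setIntegral_const, smul_eq_mul]
  have hIoc : ∫ x in Ioc q y, threeStep q a b c x ∂μ = μ.real (Ioc q y) * c := by
    rw [setIntegral_congr_fun measurableSet_Ioc fun x (hx : x ∈ Ioc q y) => by
      rw [threeStep, if_neg (not_lt.2 hx.1.le), if_neg hx.1.ne'], setIntegral_const, smul_eq_mul]
  have hint : Integrable (threeStep q a b c) μ := integrable_threeStep μ
  rw [← Iic_union_Ioc_eq_Iic hy, setIntegral_union (Iic_disjoint_Ioc le_rfl) measurableSet_Ioc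
      hint.integrableOn hint.integrableOn, ← Iio_union_right,
    setIntegral_union (disjoint_singleton_right.2 self_notMem_Iio) (measurableSet_singleton q)
      hint.integrableOn hint.integrableOn, hIio, hq, hIoc]

end threeStep

lemma mul_setIntegral_Iic_inv_threeStep_quantile (ν : Measure ℝ) [IsProbabilityMeasure ν]
    {p cl cu q A : ℝ} (hcl : 0 < cl) (hclp : cl < p) (hpcu : p < cu)
    (hq : q = quantile ν (upperCDFKink p cl cu))
    (hA : p * (cdf ν q - leftLim (cdf ν) q) / A
      = upperCDF p cl cu (cdf ν q) - upperCDF p cl cu (leftLim (cdf ν) q)) (y : ℝ) :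
    p * ∫ x in Iic y, (threeStep q cl A cu x)⁻¹ ∂ν = upperCDF p cl cu (cdf ν y) := by
  have hp : 0 < p := hcl.trans hclp
  have hclcu : cl < cu := hclp.trans hpcu
  have hτ0 := upperCDFKink_pos hcl hclp hpcu
  simp only [inv_threeStep]
  rcases lt_or_ge y q with hy | hy
  · rw [setIntegral_Iic_threeStep_of_lt ν hy, ← cdf_eq_real,
      upperCDF_of_le hp hcl hclcu (cdf_lt_of_lt_quantile hτ0 (hq ▸ hy)).le]
    ring
  · have hτq : upperCDFKink p cl cu ≤ cdf ν q :=
      hq ▸ le_cdf_quantile (upperCDFKink_lt_one hcl hclp hpcu)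
    rw [upperCDF_of_ge hp hcl hclcu hτq,
      upperCDF_of_le hp hcl hclcu (hq ▸ leftLim_cdf_quantile_le hτ0), div_eq_mul_inv] at hA
    rw [setIntegral_Iic_threeStep_of_le ν hy, measureReal_Iio_eq_leftLim_cdf,
      measureReal_singleton_eq_cdf_sub_leftLim, measureReal_Ioc_eq_cdf_sub_cdf ν hy,
      upperCDF_of_ge hp hcl hclcu (hτq.trans (monotone_cdf ν hy))]
    linear_combination hA

theorem switching_propensity_generates_upper_bound_general
    {Ω : Type*} [MeasurableSpace Ω] (P : Measure Ω) [IsProbabilityMeasure P]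
    (Y1 Y0 : Ω → ℝ) (X : Ω → Bool)
    (hY1 : Measurable Y1) (hY0 : Measurable Y0) (hX : Measurable X)
    (Y : Ω → ℝ) (hY : ∀ ω, Y ω = if X ω then Y1 ω else Y0 ω)
    (p1 : ℝ) (hp1 : p1 = (P {ω | X ω = true}).toReal)
    (cl cu : ℝ) (hcl : 0 < cl) (hclp1 : cl < p1) (hp1cu : p1 < cu)
    (G1 : ℝ → ℝ)
    (hG1 : ∀ y, G1 y = (P {ω | Y ω ≤ y ∧ X ω = true}).toReal / p1)
    (Fu1 : ℝ → ℝ)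
    (hFu1 : ∀ y, Fu1 y = min (G1 y * p1 / cl) ((cu - p1) / cu + G1 y * p1 / cu))
    (τu1 Qu1 : ℝ)
    (hτu1 : τu1 = (cu - p1) * cl / (p1 * (cu - cl)))
    (hQu1 : Qu1 = sInf {y : ℝ | τu1 ≤ G1 y})
    (A1 : ℝ)
    (hA1 : A1 = if Fu1 Qu1 - Function.leftLim Fu1 Qu1 ≠ 0 then
        (P {ω | Y ω = Qu1 ∧ X ω = true}).toReal / (Fu1 Qu1 - Function.leftLim Fu1 Qu1)
      else p1)
    (pbar : ℝ → ℝ)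
    (hpbar : ∀ y : ℝ, pbar y = if y < Qu1 then cl else if y = Qu1 then A1 else cu) :
    A1 ∈ Set.Icc cl cu ∧
    ∀ y : ℝ, (∫ ω, (if Y ω ≤ y ∧ X ω = true then (1:ℝ) else 0) / pbar (Y ω) ∂P) = Fu1 y := by
  have hp1pos : 0 < p1 := hcl.trans hclp1
  have hclcu : cl < cu := hclp1.trans hp1cu
  have hs : MeasurableSet {ω | X ω = true} := hX (measurableSet_singleton true)
  have hYm : Measurable Y := (funext hY : Y = _) ▸ Measurable.ite hs hY1 hY0
  have hPs : P.real {ω | X ω = true} = p1 := hp1.symm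
  have hPs0 : P {ω | X ω = true} ≠ 0 := by rw [← measureReal_ne_zero_iff, hPs]; exact hp1pos.ne'
  have := cond_isProbabilityMeasure hPs0
  set ν := (P[|{ω | X ω = true}]).map Y
  have : IsProbabilityMeasure ν := Measure.isProbabilityMeasure_map hYm.aemeasurable
  have hG : G1 = cdf ν := funext fun y => by rw [hG1, cdf_map_cond P hs hPs0 hYm, hPs]; rfl
  have hF : Fu1 = upperCDF p1 cl cu ∘ cdf ν := funext fun y => by rw [hFu1, hG]; rfl
  have hQ : Qu1 = quantile ν (upperCDFKink p1 cl cu) := by rw [hQu1, hτu1, hG]; rfl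
  have hjump : Fu1 Qu1 - leftLim Fu1 Qu1
      = upperCDF p1 cl cu (cdf ν Qu1) - upperCDF p1 cl cu (leftLim (cdf ν) Qu1) := by
    rw [hF, (monotone_cdf ν).leftLim_comp continuous_upperCDF.continuousAt]; rfl
  have hatom : (P {ω | Y ω = Qu1 ∧ X ω = true}).toReal
      = p1 * (cdf ν Qu1 - leftLim (cdf ν) Qu1) := by
    rw [← measureReal_singleton_eq_cdf_sub_leftLim, ← hPs]
    exact measureReal_preimage_inter_eq_mul_map_cond P hs hYm (measurableSet_singleton Qu1)
  have hLQ : leftLim (cdf ν) Qu1 ≤ cdf ν Qu1 := (monotone_cdf ν).leftLim_le le_rfl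
  rw [hjump, hatom] at hA1
  obtain ⟨hA1mem, hA1div⟩ := hA1 ▸ ite_div_mem_Icc_and_div_eq hcl
    (mul_upperCDF_sub_le hp1pos.le hcl hclcu.le hLQ)
    (le_mul_upperCDF_sub hp1pos.le hcl hclcu.le hLQ)
    ⟨hclp1.le, hp1cu.le⟩
  refine ⟨hA1mem, fun y => ?_⟩
  have hpbar_eq : pbar = threeStep Qu1 cl A1 cu := funext hpbar
  refine (integral_ite_div_comp_eq_mul_setIntegral_map_cond P hs hYm
    (hpbar_eq ▸ measurable_threeStep) y).trans ?_
  rw [hPs, hpbar_eq, hF, comp_apply]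
  exact mul_setIntegral_Iic_inv_threeStep_quantile ν hcl hclp1 hp1cu hQ hA1div y

/-- **The switching latent propensity score generates the upper cdf bound.**
Under overlap and `0 < c̲ < p₁ < c̄ < 1`, define `Ā₁` as the ratio of the point mass
`P(Y = Q̄₁, X = 1)` to the jump of `F̄₁` at `Q̄₁` (and `p₁` if the jump is zero), and the
switching propensity score `p̄₁` equal to `c̲` below `Q̄₁`, `Ā₁` at `Q̄₁`, and `c̄` above.
Then `Ā₁ ∈ [c̲, c̄]` and `E[1{Y ≤ y}·1{X=1} / p̄₁(Y)] = F̄₁(y)` for every `y`. -/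
theorem switching_propensity_generates_upper_bound
    {Ω : Type*} [MeasurableSpace Ω] (P : Measure Ω) [IsProbabilityMeasure P]
    (Y1 Y0 : Ω → ℝ) (X : Ω → Bool)
    (hY1 : Measurable Y1) (hY0 : Measurable Y0) (hX : Measurable X)
    (Y : Ω → ℝ) (hY : ∀ ω, Y ω = if X ω then Y1 ω else Y0 ω)
    (p1 p0 : ℝ) (hp1 : p1 = (P {ω | X ω = true}).toReal) (hp0 : p0 = 1 - p1)
    (hov : 0 < p1 ∧ p1 < 1)
    (cl cu : ℝ) (hcl : 0 < cl) (hclp1 : cl < p1) (hp1cu : p1 < cu) (hcu : cu < 1)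
    (G1 : ℝ → ℝ)
    (hG1 : ∀ y, G1 y = (P {ω | Y ω ≤ y ∧ X ω = true}).toReal / p1)
    (Fu1 : ℝ → ℝ)
    (hFu1 : ∀ y, Fu1 y = min (G1 y * p1 / cl) ((cu - p1) / cu + G1 y * p1 / cu))
    (τu1 Qu1 : ℝ)
    (hτu1 : τu1 = (cu - p1) * cl / (p1 * (cu - cl)))
    (hQu1 : Qu1 = sInf {y : ℝ | τu1 ≤ G1 y})
    (A1 : ℝ)
    (hA1 : A1 = if Fu1 Qu1 - Function.leftLim Fu1 Qu1 ≠ 0 then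
        (P {ω | Y ω = Qu1 ∧ X ω = true}).toReal / (Fu1 Qu1 - Function.leftLim Fu1 Qu1)
      else p1)
    (pbar : ℝ → ℝ)
    (hpbar : ∀ y : ℝ, pbar y = if y < Qu1 then cl else if y = Qu1 then A1 else cu) :
    A1 ∈ Set.Icc cl cu ∧
    ∀ y : ℝ, (∫ ω, (if Y ω ≤ y ∧ X ω = true then (1:ℝ) else 0) / pbar (Y ω) ∂P) = Fu1 y :=
  switching_propensity_generates_upper_bound_general P Y1 Y0 X hY1 hY0 hX Y hY p1 hp1 cl cu hcl
    hclp1 hp1cu G1 hG1 Fu1 hFu1 τu1 Qu1 hτu1 hQu1 A1 hA1 pbar hpbar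
end
end

section
/- Comonotonic aggregation identity. Assume overlap and 0 < c̲ ≤ p₁ ≤ c̄ < 1. Then for all (y₁, y₀) ∈ ℝ²: p₁·min{G₁(y₁), F̲₀¹(y₀)} + p₀·min{F̄₁⁰(y₁), G₀(y₀)} = min{F̄₁(y₁), F̲₀(y₀)}, and p₁·min{G₁(y₁), F̄₀¹(y₀)} + p₀·min{F̲₁⁰(y₁), G₀(y₀)} = min{F̲₁(y₁), F̄₀(y₀)}. -/
/-!
By the law of total probability each bound on a marginal distribution splits as observed mass plus
`p₀` or `p₁` times the matching counterfactual bound, e.g. `F̄₁ = p₁ G₁ + p₀ F̄₁⁰` and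
`F̲₀ = p₀ G₀ + p₁ F̲₀¹`. For each propensity value `c`, the comparisons of `G₀(y₀)` with the
arm-1 counterfactual term at `c` and of the arm-0 counterfactual term at `c` with `G₁(y₁)` are the
same linear inequality, so `G₀(y₀) < F̄₁⁰(y₁) ↔ F̲₀¹(y₀) < G₁(y₁)`. Hence the two minima on the
left are taken on matching sides, and the weighted sum of minima is the minimum of the sums.
-/

open MeasureTheory

theorem min_add_min_eq_min_add_add_of_lt_iff {α : Type*} [AddCommMonoid α] [LinearOrder α]
    [IsOrderedCancelAddMonoid α] {a b u v : α} (h : b < u ↔ v < a) :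
    min a v + min u b = min (a + u) (b + v) := by
  rcases le_or_gt u b with hub | hbu
  · have hav : a ≤ v := not_lt.mp fun hva => (h.mpr hva).not_ge hub
    rw [min_eq_left hav, min_eq_left hub,
      min_eq_left (by rw [add_comm b]; exact add_le_add hav hub)]
  · have hva : v < a := h.mp hbu
    rw [min_eq_right hva.le, min_eq_right hbu.le,
      min_eq_right (by rw [add_comm b]; exact add_le_add hva.le hbu.le), add_comm]

theorem mul_min_add_mul_min_eq_of_lt_iff {p₁ p₀ a b u v : ℝ} (hp₁ : 0 < p₁) (hp₀ : 0 < p₀)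
    (h : b < u ↔ v < a) :
    p₁ * min a v + p₀ * min u b = min (p₁ * a + p₀ * u) (p₀ * b + p₁ * v) := by
  rw [mul_min_of_nonneg _ _ hp₁.le, mul_min_of_nonneg _ _ hp₀.le]
  refine min_add_min_eq_min_add_add_of_lt_iff ?_
  rw [mul_lt_mul_iff_right₀ hp₀, mul_lt_mul_iff_right₀ hp₁]
  exact h

section BoundDecomposition

variable {p₁ p₀ c c' : ℝ} (g : ℝ)

theorem upper_treated_eq (hp₀ : 0 < p₀) (hc : c ≠ 0) (hc' : c' ≠ 0) :
    min (g * p₁ / c) ((c' - p₁) / c' + g * p₁ / c') =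
      p₁ * g + p₀ * min (g * p₁ * (1 - c) / (p₀ * c))
        ((c' - p₁) / (c' * p₀) + g * p₁ * (1 - c') / (p₀ * c')) := by
  rw [mul_min_of_nonneg _ _ hp₀.le, ← min_add_add_left]
  congr 1 <;> field_simp <;> ring

theorem lower_treated_eq (hp₀ : 0 < p₀) (hc : c ≠ 0) (hc' : c' ≠ 0) :
    max (g * p₁ / c) ((c' - p₁) / c' + g * p₁ / c') =
      p₁ * g + p₀ * max (g * p₁ * (1 - c) / (p₀ * c))
        ((c' - p₁) / (c' * p₀) + g * p₁ * (1 - c') / (p₀ * c')) := by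
  rw [mul_max_of_nonneg _ _ hp₀.le, ← max_add_add_left]
  congr 1 <;> field_simp <;> ring

theorem upper_control_eq (hp₁ : 0 < p₁) (hc : 1 - c ≠ 0) (hc' : 1 - c' ≠ 0) :
    min (g * p₀ / (1 - c)) ((p₁ - c') / (1 - c') + g * p₀ / (1 - c')) =
      p₀ * g + p₁ * min (g * p₀ * c / (p₁ * (1 - c)))
        ((p₁ - c') / ((1 - c') * p₁) + g * p₀ * c' / (p₁ * (1 - c'))) := by
  rw [mul_min_of_nonneg _ _ hp₁.le, ← min_add_add_left]
  congr 1 <;> field_simp <;> ring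

theorem lower_control_eq (hp₁ : 0 < p₁) (hc : 1 - c ≠ 0) (hc' : 1 - c' ≠ 0) :
    max (g * p₀ / (1 - c)) ((p₁ - c') / (1 - c') + g * p₀ / (1 - c')) =
      p₀ * g + p₁ * max (g * p₀ * c / (p₁ * (1 - c)))
        ((p₁ - c') / ((1 - c') * p₁) + g * p₀ * c' / (p₁ * (1 - c'))) := by
  rw [mul_max_of_nonneg _ _ hp₁.le, ← max_add_add_left]
  congr 1 <;> field_simp <;> ring

end BoundDecomposition

section CounterfactualComparison

variable {p₁ p₀ c g₁ g₀ : ℝ}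

theorem lt_counterfactual_iff (hp₁ : 0 < p₁) (hp₀ : 0 < p₀) (hc : 0 < c) (hc₁ : 0 < 1 - c) :
    g₀ < g₁ * p₁ * (1 - c) / (p₀ * c) ↔ g₀ * p₀ * c / (p₁ * (1 - c)) < g₁ := by
  rw [lt_div_iff₀ (by positivity), div_lt_iff₀ (by positivity)]
  constructor <;> intro h <;> linarith

theorem lt_shifted_counterfactual_iff (hp₁ : 0 < p₁) (hp₀ : 0 < p₀) (hc : 0 < c)
    (hc₁ : 0 < 1 - c) :
    g₀ < (c - p₁) / (c * p₀) + g₁ * p₁ * (1 - c) / (p₀ * c) ↔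
      (p₁ - c) / ((1 - c) * p₁) + g₀ * p₀ * c / (p₁ * (1 - c)) < g₁ := by
  have hu : (c - p₁) / (c * p₀) + g₁ * p₁ * (1 - c) / (p₀ * c) =
      (c - p₁ + g₁ * p₁ * (1 - c)) / (p₀ * c) := by ring
  have hv : (p₁ - c) / ((1 - c) * p₁) + g₀ * p₀ * c / (p₁ * (1 - c)) =
      (p₁ - c + g₀ * p₀ * c) / (p₁ * (1 - c)) := by ring
  rw [hu, hv, lt_div_iff₀ (by positivity), div_lt_iff₀ (by positivity)]
  constructor <;> intro h <;> linarith

end CounterfactualComparison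

theorem comonotonic_aggregation_identity_general
    (p1 p0 : ℝ) (hp0 : p0 = 1 - p1)
    (hov : 0 < p1 ∧ p1 < 1)
    (cl cu : ℝ) (hcl : 0 < cl) (hclp1 : cl ≤ p1) (hp1cu : p1 ≤ cu) (hcu : cu < 1)
    (G1 G0 : ℝ → ℝ)
    (Fu1 Fl1 Fu0 Fl0 : ℝ → ℝ)
    (hFu1 : ∀ y, Fu1 y = min (G1 y * p1 / cl) ((cu - p1) / cu + G1 y * p1 / cu))
    (hFl1 : ∀ y, Fl1 y = max (G1 y * p1 / cu) ((cl - p1) / cl + G1 y * p1 / cl))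
    (hFu0 : ∀ y, Fu0 y = min (G0 y * p0 / (1 - cu)) ((p1 - cl) / (1 - cl) + G0 y * p0 / (1 - cl)))
    (hFl0 : ∀ y, Fl0 y = max (G0 y * p0 / (1 - cl)) ((p1 - cu) / (1 - cu) + G0 y * p0 / (1 - cu)))
    (Fu10 Fl10 Fu01 Fl01 : ℝ → ℝ)
    (hFu10 : ∀ y, Fu10 y = min (G1 y * p1 * (1 - cl) / (p0 * cl))
      ((cu - p1) / (cu * p0) + G1 y * p1 * (1 - cu) / (p0 * cu)))
    (hFl10 : ∀ y, Fl10 y = max (G1 y * p1 * (1 - cu) / (p0 * cu))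
      ((cl - p1) / (cl * p0) + G1 y * p1 * (1 - cl) / (p0 * cl)))
    (hFu01 : ∀ y, Fu01 y = min (G0 y * p0 * cu / (p1 * (1 - cu)))
      ((p1 - cl) / ((1 - cl) * p1) + G0 y * p0 * cl / (p1 * (1 - cl))))
    (hFl01 : ∀ y, Fl01 y = max (G0 y * p0 * cl / (p1 * (1 - cl)))
      ((p1 - cu) / ((1 - cu) * p1) + G0 y * p0 * cu / (p1 * (1 - cu)))) :
    ∀ y1 y0 : ℝ,
      p1 * min (G1 y1) (Fl01 y0) + p0 * min (Fu10 y1) (G0 y0) = min (Fu1 y1) (Fl0 y0) ∧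
      p1 * min (G1 y1) (Fu01 y0) + p0 * min (Fl10 y1) (G0 y0) = min (Fl1 y1) (Fu0 y0) := by
  obtain ⟨hp1pos, hp1lt⟩ := hov
  have hp0pos : 0 < p0 := by linarith
  have hcu0 : 0 < cu := hp1pos.trans_le hp1cu
  have h1cl : 0 < 1 - cl := by linarith
  have h1cu : 0 < 1 - cu := by linarith
  intro y1 y0
  constructor
  · have hkey : G0 y0 < Fu10 y1 ↔ Fl01 y0 < G1 y1 := by
      rw [hFu10, hFl01, lt_min_iff, max_lt_iff, lt_counterfactual_iff hp1pos hp0pos hcl h1cl,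
        lt_shifted_counterfactual_iff hp1pos hp0pos hcu0 h1cu]
    rw [mul_min_add_mul_min_eq_of_lt_iff hp1pos hp0pos hkey, hFu1, hFl0, hFu10, hFl01,
      upper_treated_eq _ hp0pos hcl.ne' hcu0.ne', lower_control_eq _ hp1pos h1cl.ne' h1cu.ne']
  · have hkey : G0 y0 < Fl10 y1 ↔ Fu01 y0 < G1 y1 := by
      rw [hFl10, hFu01, lt_max_iff, min_lt_iff, lt_counterfactual_iff hp1pos hp0pos hcu0 h1cu,
        lt_shifted_counterfactual_iff hp1pos hp0pos hcl h1cl]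
    rw [mul_min_add_mul_min_eq_of_lt_iff hp1pos hp0pos hkey, hFl1, hFu0, hFl10, hFu01,
      lower_treated_eq _ hp0pos hcu0.ne' hcl.ne', upper_control_eq _ hp1pos h1cu.ne' h1cl.ne']

/-- **Comonotonic aggregation identity.**
Under overlap and `0 < c̲ ≤ p₁ ≤ c̄ < 1`, for all `(y₁, y₀)`:
`p₁·min{G₁(y₁), F̲₀¹(y₀)} + p₀·min{F̄₁⁰(y₁), G₀(y₀)} = min{F̄₁(y₁), F̲₀(y₀)}` and
`p₁·min{G₁(y₁), F̄₀¹(y₀)} + p₀·min{F̲₁⁰(y₁), G₀(y₀)} = min{F̲₁(y₁), F̄₀(y₀)}`. -/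
theorem comonotonic_aggregation_identity
    {Ω : Type*} [MeasurableSpace Ω] (P : Measure Ω) [IsProbabilityMeasure P]
    (Y1 Y0 : Ω → ℝ) (X : Ω → Bool)
    (hY1 : Measurable Y1) (hY0 : Measurable Y0) (hX : Measurable X)
    (Y : Ω → ℝ) (hY : ∀ ω, Y ω = if X ω then Y1 ω else Y0 ω)
    (p1 p0 : ℝ) (hp1 : p1 = (P {ω | X ω = true}).toReal) (hp0 : p0 = 1 - p1)
    (hov : 0 < p1 ∧ p1 < 1)
    (cl cu : ℝ) (hcl : 0 < cl) (hclp1 : cl ≤ p1) (hp1cu : p1 ≤ cu) (hcu : cu < 1)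
    (G1 G0 : ℝ → ℝ)
    (hG1 : ∀ y, G1 y = (P {ω | Y ω ≤ y ∧ X ω = true}).toReal / p1)
    (hG0 : ∀ y, G0 y = (P {ω | Y ω ≤ y ∧ X ω = false}).toReal / p0)
    (Fu1 Fl1 Fu0 Fl0 : ℝ → ℝ)
    (hFu1 : ∀ y, Fu1 y = min (G1 y * p1 / cl) ((cu - p1) / cu + G1 y * p1 / cu))
    (hFl1 : ∀ y, Fl1 y = max (G1 y * p1 / cu) ((cl - p1) / cl + G1 y * p1 / cl))
    (hFu0 : ∀ y, Fu0 y = min (G0 y * p0 / (1 - cu)) ((p1 - cl) / (1 - cl) + G0 y * p0 / (1 - cl)))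
    (hFl0 : ∀ y, Fl0 y = max (G0 y * p0 / (1 - cl)) ((p1 - cu) / (1 - cu) + G0 y * p0 / (1 - cu)))
    (Fu10 Fl10 Fu01 Fl01 : ℝ → ℝ)
    (hFu10 : ∀ y, Fu10 y = min (G1 y * p1 * (1 - cl) / (p0 * cl))
      ((cu - p1) / (cu * p0) + G1 y * p1 * (1 - cu) / (p0 * cu)))
    (hFl10 : ∀ y, Fl10 y = max (G1 y * p1 * (1 - cu) / (p0 * cu))
      ((cl - p1) / (cl * p0) + G1 y * p1 * (1 - cl) / (p0 * cl)))
    (hFu01 : ∀ y, Fu01 y = min (G0 y * p0 * cu / (p1 * (1 - cu)))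
      ((p1 - cl) / ((1 - cl) * p1) + G0 y * p0 * cl / (p1 * (1 - cl))))
    (hFl01 : ∀ y, Fl01 y = max (G0 y * p0 * cl / (p1 * (1 - cl)))
      ((p1 - cu) / ((1 - cu) * p1) + G0 y * p0 * cu / (p1 * (1 - cu)))) :
    ∀ y1 y0 : ℝ,
      p1 * min (G1 y1) (Fl01 y0) + p0 * min (Fu10 y1) (G0 y0) = min (Fu1 y1) (Fl0 y0) ∧
      p1 * min (G1 y1) (Fu01 y0) + p0 * min (Fl10 y1) (G0 y0) = min (Fl1 y1) (Fu0 y0) :=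
  comonotonic_aggregation_identity_general p1 p0 hp0 hov cl cu hcl hclp1 hp1cu hcu G1 G0 Fu1 Fl1 Fu0
    Fl0 hFu1 hFl1 hFu0 hFl0 Fu10 Fl10 Fu01 Fl01 hFu10 hFl10 hFu01 hFl01
end

section
/- Counter-monotonic aggregation identity. Assume overlap and 0 < c̲ ≤ p₁ ≤ c̄ < 1. Then for all (y₁, y₀) ∈ ℝ²: p₁·max{G₁(y₁) + F̄₀¹(y₀) − 1, 0} + p₀·max{F̄₁⁰(y₁) + G₀(y₀) − 1, 0} = max{F̄₁(y₁) + F̄₀(y₀) − 1, 0}, and p₁·max{G₁(y₁) + F̲₀¹(y₀) − 1, 0} + p₀·max{F̲₁⁰(y₁) + G₀(y₀) − 1, 0} = max{F̲₁(y₁) + F̲₀(y₀) − 1, 0}. -/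
open MeasureTheory ProbabilityTheory Set Filter Function

noncomputable section

/-- Finishing lemma: if the two inner terms have coherent signs and aggregate
linearly, the `max` aggregation identity holds. -/
lemma agg_core (p1 p0 x y z : ℝ) (hp1 : 0 < p1) (hp0 : 0 < p0)
    (hxy : 0 ≤ x ↔ 0 ≤ y) (hz : p1 * x + p0 * y = z) :
    p1 * max x 0 + p0 * max y 0 = max z 0 := by
  rcases le_or_gt 0 x with h | h
  · have hy := hxy.mp h
    have hz0 : 0 ≤ z := by nlinarith [mul_nonneg hp1.le h, mul_nonneg hp0.le hy]
    rw [max_eq_left h, max_eq_left hy, max_eq_left hz0, hz]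
  · have hy : y < 0 := by
      by_contra hc
      exact absurd (hxy.mpr (not_lt.mp hc)) (not_le.mpr h)
    have hz0 : z ≤ 0 := by nlinarith [mul_neg_of_pos_of_neg hp1 h, mul_neg_of_pos_of_neg hp0 hy]
    rw [max_eq_right h.le, max_eq_right hy.le, max_eq_right hz0]
    ring

lemma lin_min (q p c d : ℝ) (hp : 0 ≤ p) :
    q + p * min c d = min (q + p * c) (q + p * d) := by
  rcases le_total c d with h | h
  · rw [min_eq_left h, min_eq_left (by nlinarith [mul_le_mul_of_nonneg_left h hp])]
  · rw [min_eq_right h, min_eq_right (by nlinarith [mul_le_mul_of_nonneg_left h hp])]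

lemma lin_max (q p c d : ℝ) (hp : 0 ≤ p) :
    q + p * max c d = max (q + p * c) (q + p * d) := by
  rcases le_total c d with h | h
  · rw [max_eq_right h, max_eq_right (by nlinarith [mul_le_mul_of_nonneg_left h hp])]
  · rw [max_eq_left h, max_eq_left (by nlinarith [mul_le_mul_of_nonneg_left h hp])]

set_option maxHeartbeats 1600000 in
/-- **Counter-monotonic aggregation identity.**
Under overlap and `0 < c̲ ≤ p₁ ≤ c̄ < 1`, for all `(y₁, y₀)`:
`p₁·max{G₁(y₁)+F̄₀¹(y₀)−1, 0} + p₀·max{F̄₁⁰(y₁)+G₀(y₀)−1, 0} = max{F̄₁(y₁)+F̄₀(y₀)−1, 0}` and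
`p₁·max{G₁(y₁)+F̲₀¹(y₀)−1, 0} + p₀·max{F̲₁⁰(y₁)+G₀(y₀)−1, 0} = max{F̲₁(y₁)+F̲₀(y₀)−1, 0}`. -/
theorem countermonotonic_aggregation_identity
    {Ω : Type*} [MeasurableSpace Ω] (P : Measure Ω) [IsProbabilityMeasure P]
    (Y1 Y0 : Ω → ℝ) (X : Ω → Bool)
    (hY1 : Measurable Y1) (hY0 : Measurable Y0) (hX : Measurable X)
    (Y : Ω → ℝ) (hY : ∀ ω, Y ω = if X ω then Y1 ω else Y0 ω)
    (p1 p0 : ℝ) (hp1 : p1 = (P {ω | X ω = true}).toReal) (hp0 : p0 = 1 - p1)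
    (hov : 0 < p1 ∧ p1 < 1)
    (cl cu : ℝ) (hcl : 0 < cl) (hclp1 : cl ≤ p1) (hp1cu : p1 ≤ cu) (hcu : cu < 1)
    (G1 G0 : ℝ → ℝ)
    (hG1 : ∀ y, G1 y = (P {ω | Y ω ≤ y ∧ X ω = true}).toReal / p1)
    (hG0 : ∀ y, G0 y = (P {ω | Y ω ≤ y ∧ X ω = false}).toReal / p0)
    (Fu1 Fl1 Fu0 Fl0 : ℝ → ℝ)
    (hFu1 : ∀ y, Fu1 y = min (G1 y * p1 / cl) ((cu - p1) / cu + G1 y * p1 / cu))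
    (hFl1 : ∀ y, Fl1 y = max (G1 y * p1 / cu) ((cl - p1) / cl + G1 y * p1 / cl))
    (hFu0 : ∀ y, Fu0 y = min (G0 y * p0 / (1 - cu)) ((p1 - cl) / (1 - cl) + G0 y * p0 / (1 - cl)))
    (hFl0 : ∀ y, Fl0 y = max (G0 y * p0 / (1 - cl)) ((p1 - cu) / (1 - cu) + G0 y * p0 / (1 - cu)))
    (Fu10 Fl10 Fu01 Fl01 : ℝ → ℝ)
    (hFu10 : ∀ y, Fu10 y = min (G1 y * p1 * (1 - cl) / (p0 * cl))
      ((cu - p1) / (cu * p0) + G1 y * p1 * (1 - cu) / (p0 * cu)))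
    (hFl10 : ∀ y, Fl10 y = max (G1 y * p1 * (1 - cu) / (p0 * cu))
      ((cl - p1) / (cl * p0) + G1 y * p1 * (1 - cl) / (p0 * cl)))
    (hFu01 : ∀ y, Fu01 y = min (G0 y * p0 * cu / (p1 * (1 - cu)))
      ((p1 - cl) / ((1 - cl) * p1) + G0 y * p0 * cl / (p1 * (1 - cl))))
    (hFl01 : ∀ y, Fl01 y = max (G0 y * p0 * cl / (p1 * (1 - cl)))
      ((p1 - cu) / ((1 - cu) * p1) + G0 y * p0 * cu / (p1 * (1 - cu)))) :
    ∀ y1 y0 : ℝ,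
      p1 * max (G1 y1 + Fu01 y0 - 1) 0 + p0 * max (Fu10 y1 + G0 y0 - 1) 0
        = max (Fu1 y1 + Fu0 y0 - 1) 0 ∧
      p1 * max (G1 y1 + Fl01 y0 - 1) 0 + p0 * max (Fl10 y1 + G0 y0 - 1) 0
        = max (Fl1 y1 + Fl0 y0 - 1) 0 := by
  intro y1 y0
  obtain ⟨hp1pos, hp1lt⟩ := hov
  have hp0pos : 0 < p0 := by rw [hp0]; linarith
  have hcupos : 0 < cu := lt_of_lt_of_le hcl (hclp1.trans hp1cu)
  have h1cl : 0 < 1 - cl := by linarith [hclp1.trans hp1cu]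
  have h1cu : 0 < 1 - cu := by linarith
  have hclne : cl ≠ 0 := hcl.ne'
  have hcune : cu ≠ 0 := hcupos.ne'
  have h1clne : (1 : ℝ) - cl ≠ 0 := h1cl.ne'
  have h1cune : (1 : ℝ) - cu ≠ 0 := h1cu.ne'
  have hp1ne : p1 ≠ 0 := hp1pos.ne'
  have hp0ne : p0 ≠ 0 := hp0pos.ne'
  set g1 := G1 y1 with hg1
  set g0 := G0 y0 with hg0
  constructor
  · -- upper bounds
    rw [hFu01 y0, hFu10 y1, hFu1 y1, hFu0 y0, ← hg1, ← hg0]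
    apply agg_core p1 p0 _ _ _ hp1pos hp0pos
    · -- sign coherence
      have e1 : (1 - g1 ≤ g0 * p0 * cu / (p1 * (1 - cu))) ↔
          0 ≤ p1 * (1 - cu) * (g1 - 1) + cu * p0 * g0 := by
        rw [le_div_iff₀ (by positivity)]
        constructor <;> intro h <;> nlinarith [h]
      have eB : (p1 - cl) / ((1 - cl) * p1) + g0 * p0 * cl / (p1 * (1 - cl))
          = (p1 - cl + g0 * p0 * cl) / (p1 * (1 - cl)) := by field_simp
      have e2 : (1 - g1 ≤ (p1 - cl) / ((1 - cl) * p1) + g0 * p0 * cl / (p1 * (1 - cl))) ↔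
          0 ≤ p1 * (1 - cl) * g1 - cl * p0 + cl * p0 * g0 := by
        rw [eB, le_div_iff₀ (by positivity)]
        constructor <;> intro h <;> nlinarith [h]
      have e3 : (1 - g0 ≤ g1 * p1 * (1 - cl) / (p0 * cl)) ↔
          0 ≤ p1 * (1 - cl) * g1 - cl * p0 + cl * p0 * g0 := by
        rw [le_div_iff₀ (by positivity)]
        constructor <;> intro h <;> nlinarith [h]
      have eD : (cu - p1) / (cu * p0) + g1 * p1 * (1 - cu) / (p0 * cu)
          = (cu - p1 + g1 * p1 * (1 - cu)) / (p0 * cu) := by field_simp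
      have e4 : (1 - g0 ≤ (cu - p1) / (cu * p0) + g1 * p1 * (1 - cu) / (p0 * cu)) ↔
          0 ≤ p1 * (1 - cu) * (g1 - 1) + cu * p0 * g0 := by
        rw [eD, le_div_iff₀ (by positivity)]
        constructor <;> intro h <;> nlinarith [h, hp0]
      constructor
      · intro h
        have h' : 1 - g1 ≤ min (g0 * p0 * cu / (p1 * (1 - cu)))
            ((p1 - cl) / ((1 - cl) * p1) + g0 * p0 * cl / (p1 * (1 - cl))) := by linarith
        obtain ⟨ha, hb⟩ := le_min_iff.mp h'
        have : 1 - g0 ≤ min (g1 * p1 * (1 - cl) / (p0 * cl))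
            ((cu - p1) / (cu * p0) + g1 * p1 * (1 - cu) / (p0 * cu)) :=
          le_min_iff.mpr ⟨e3.mpr (e2.mp hb), e4.mpr (e1.mp ha)⟩
        linarith
      · intro h
        have h' : 1 - g0 ≤ min (g1 * p1 * (1 - cl) / (p0 * cl))
            ((cu - p1) / (cu * p0) + g1 * p1 * (1 - cu) / (p0 * cu)) := by linarith
        obtain ⟨ha, hb⟩ := le_min_iff.mp h'
        have : 1 - g1 ≤ min (g0 * p0 * cu / (p1 * (1 - cu)))
            ((p1 - cl) / ((1 - cl) * p1) + g0 * p0 * cl / (p1 * (1 - cl))) :=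
          le_min_iff.mpr ⟨e1.mpr (e4.mp hb), e2.mpr (e3.mp ha)⟩
        linarith
    · -- linear aggregation
      have h1 : p1 * g1 + p0 * min (g1 * p1 * (1 - cl) / (p0 * cl))
          ((cu - p1) / (cu * p0) + g1 * p1 * (1 - cu) / (p0 * cu))
          = min (g1 * p1 / cl) ((cu - p1) / cu + g1 * p1 / cu) := by
        rw [lin_min _ _ _ _ hp0pos.le]
        congr 1 <;> field_simp <;> ring
      have h0 : p0 * g0 + p1 * min (g0 * p0 * cu / (p1 * (1 - cu)))
          ((p1 - cl) / ((1 - cl) * p1) + g0 * p0 * cl / (p1 * (1 - cl)))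
          = min (g0 * p0 / (1 - cu)) ((p1 - cl) / (1 - cl) + g0 * p0 / (1 - cl)) := by
        rw [lin_min _ _ _ _ hp1pos.le]
        congr 1 <;> field_simp <;> ring
      rw [← h1, ← h0, hp0]; ring
  · -- lower bounds
    rw [hFl01 y0, hFl10 y1, hFl1 y1, hFl0 y0, ← hg1, ← hg0]
    apply agg_core p1 p0 _ _ _ hp1pos hp0pos
    · have e1 : (1 - g1 ≤ g0 * p0 * cl / (p1 * (1 - cl))) ↔
          0 ≤ p1 * (1 - cl) * (g1 - 1) + cl * p0 * g0 := by
        rw [le_div_iff₀ (by positivity)]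
        constructor <;> intro h <;> nlinarith [h]
      have eB : (p1 - cu) / ((1 - cu) * p1) + g0 * p0 * cu / (p1 * (1 - cu))
          = (p1 - cu + g0 * p0 * cu) / (p1 * (1 - cu)) := by field_simp
      have e2 : (1 - g1 ≤ (p1 - cu) / ((1 - cu) * p1) + g0 * p0 * cu / (p1 * (1 - cu))) ↔
          0 ≤ p1 * (1 - cu) * g1 - cu * p0 + cu * p0 * g0 := by
        rw [eB, le_div_iff₀ (by positivity)]
        constructor <;> intro h <;> nlinarith [h]
      have e3 : (1 - g0 ≤ g1 * p1 * (1 - cu) / (p0 * cu)) ↔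
          0 ≤ p1 * (1 - cu) * g1 - cu * p0 + cu * p0 * g0 := by
        rw [le_div_iff₀ (by positivity)]
        constructor <;> intro h <;> nlinarith [h]
      have eD : (cl - p1) / (cl * p0) + g1 * p1 * (1 - cl) / (p0 * cl)
          = (cl - p1 + g1 * p1 * (1 - cl)) / (p0 * cl) := by field_simp
      have e4 : (1 - g0 ≤ (cl - p1) / (cl * p0) + g1 * p1 * (1 - cl) / (p0 * cl)) ↔
          0 ≤ p1 * (1 - cl) * (g1 - 1) + cl * p0 * g0 := by
        rw [eD, le_div_iff₀ (by positivity)]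
        constructor <;> intro h <;> nlinarith [h, hp0]
      constructor
      · intro h
        have h' : 1 - g1 ≤ max (g0 * p0 * cl / (p1 * (1 - cl)))
            ((p1 - cu) / ((1 - cu) * p1) + g0 * p0 * cu / (p1 * (1 - cu))) := by linarith
        have : 1 - g0 ≤ max (g1 * p1 * (1 - cu) / (p0 * cu))
            ((cl - p1) / (cl * p0) + g1 * p1 * (1 - cl) / (p0 * cl)) := by
          rcases le_max_iff.mp h' with ha | hb
          · exact le_max_iff.mpr (Or.inr (e4.mpr (e1.mp ha)))
          · exact le_max_iff.mpr (Or.inl (e3.mpr (e2.mp hb)))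
        linarith
      · intro h
        have h' : 1 - g0 ≤ max (g1 * p1 * (1 - cu) / (p0 * cu))
            ((cl - p1) / (cl * p0) + g1 * p1 * (1 - cl) / (p0 * cl)) := by linarith
        have : 1 - g1 ≤ max (g0 * p0 * cl / (p1 * (1 - cl)))
            ((p1 - cu) / ((1 - cu) * p1) + g0 * p0 * cu / (p1 * (1 - cu))) := by
          rcases le_max_iff.mp h' with ha | hb
          · exact le_max_iff.mpr (Or.inr (e2.mpr (e3.mp ha)))
          · exact le_max_iff.mpr (Or.inl (e1.mpr (e4.mp hb)))
        linarith
    · have h1 : p1 * g1 + p0 * max (g1 * p1 * (1 - cu) / (p0 * cu))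
          ((cl - p1) / (cl * p0) + g1 * p1 * (1 - cl) / (p0 * cl))
          = max (g1 * p1 / cu) ((cl - p1) / cl + g1 * p1 / cl) := by
        rw [lin_max _ _ _ _ hp0pos.le]
        congr 1 <;> field_simp <;> ring
      have h0 : p0 * g0 + p1 * max (g0 * p0 * cl / (p1 * (1 - cl)))
          ((p1 - cu) / ((1 - cu) * p1) + g0 * p0 * cu / (p1 * (1 - cu)))
          = max (g0 * p0 / (1 - cl)) ((p1 - cu) / (1 - cu) + g0 * p0 / (1 - cu)) := by
        rw [lin_max _ _ _ _ hp1pos.le]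
        congr 1 <;> field_simp <;> ring
      rw [← h1, ← h0, hp0]; ring
end
end
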